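/- arXiv:1712.00913 — 7 statements merged into one kernel-verified Lean document; each statement's English description precedes it below -/
import Mathlib

section
/- If X₁ and X₂ are independent integer-valued random variables with finitely supported #-log-concave probability mass functions f₁ and f₂, then the convolution f₁ ⋆ f₂ is majorized by the convolution f₁^# ⋆ f₂^#. -/
noncomputable section

def Majorized (f g : ℤ → ℝ) : Prop :=
  (∀ s : Finset ℤ, ∃ t : Finset ℤ, t.card = s.card ∧ ∑ i ∈ s, f i ≤ ∑ i ∈ t, g i)
  ∧ ∑' i, f i = ∑' i, g i

def IsPMF (f : ℤ → ℝ) : Prop := (∀ i, 0 ≤ f i) ∧ ∑' i, f i = 1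

/-- The squeezed rearrangement `f^#`: if the support of `f` is `{x₀ < x₁ < ⋯ < x_n}`, then
`f^#(r) = f(x_r)` for `0 ≤ r ≤ n` and `f^#(r) = 0` otherwise. -/
def hashFn (f : ℤ → ℝ) (hf : (Function.support f).Finite) : ℤ → ℝ := fun r =>
  if h : 0 ≤ r ∧ r.toNat < hf.toFinset.card then
    f ((hf.toFinset.sort (· ≤ ·)).get ⟨r.toNat, by simpa [Finset.length_sort] using h.2⟩)
  else 0

/-- `f` is #-log-concave: its squeezed rearrangement is log-concave. -/
def HashLogConcave (f : ℤ → ℝ) (hf : (Function.support f).Finite) : Prop :=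
  ∀ i : ℤ, hashFn f hf (i - 1) * hashFn f hf (i + 1) ≤ (hashFn f hf i) ^ 2

/-- Convolution of two functions on ℤ. -/
def conv (f g : ℤ → ℝ) : ℤ → ℝ := fun k => ∑' i, f i * g (k - i)

/-!
Write `a = f₁^#`, `b = f₂^#`, and let `x`, `y` enumerate the supports of `f₁`, `f₂` increasingly.
Then `∑_{z ∈ s} (f₁ ⋆ f₂)(z)` is the `a ⊗ b`-weight of the grid points `(r, r')` with
`x r + y r' ∈ s`. Each fibre `x r + y r' = z` is an antichain for the componentwise order, and the
total weight of the level `r + r' = t` is `(a ⋆ b)(t)`. Log-concavity of `a` and `b` makes the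
weight distributions of consecutive levels interlace, which gives normalized matching and hence
the weighted LYM inequality `∑_{p ∈ A} w(p) / (a ⋆ b)(level p) ≤ 1` for every antichain `A`.
Summing over the `#s` fibres, the relevant points have normalized weight at most `#s`, and a
fractional knapsack argument bounds their weight by the sum of `#s` values of `a ⋆ b`.
-/

open Finset

lemma Finset.sum_le_sum_of_injOn {ι κ M : Type*} [AddCommMonoid M] [PartialOrder M]
    [IsOrderedAddMonoid M] [DecidableEq κ] {s : Finset ι} {t : Finset κ} {f : ι → M} {g : κ → M}
    (e : ι → κ) (he : ∀ i ∈ s, e i ∈ t) (hinj : Set.InjOn e s) (hfg : ∀ i ∈ s, f i ≤ g (e i))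
    (hg : ∀ j ∈ t, 0 ≤ g j) : ∑ i ∈ s, f i ≤ ∑ j ∈ t, g j :=
  calc ∑ i ∈ s, f i ≤ ∑ i ∈ s, g (e i) := sum_le_sum hfg
    _ = ∑ j ∈ s.image e, g j := (sum_image hinj).symm
    _ ≤ ∑ j ∈ t, g j :=
      sum_le_sum_of_subset_of_nonneg (image_subset_iff.2 he) fun j hj _ => hg j hj

lemma Finset.sum_filter_le_add_one {M : Type*} [AddCommMonoid M] (X : Finset ℤ) (w : ℤ → M)
    (ρ : ℤ) :
    ∑ r ∈ X with r ≤ ρ + 1, w r = ∑ r ∈ X with r ≤ ρ, w r + if ρ + 1 ∈ X then w (ρ + 1) else 0 := by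
  rw [filter_congr (q := fun r => r ≤ ρ ∨ r = ρ + 1) (fun r _ => by omega), filter_or,
    sum_union (disjoint_filter.2 fun r _ h₁ h₂ => by omega), sum_filter (· = ρ + 1),
    sum_ite_eq']

lemma Finset.exists_subset_card_eq_forall_le {ι : Type*} [DecidableEq ι] {Λ : Finset ι}
    (c : ι → ℝ) {k : ℕ} (hk : k ≤ #Λ) :
    ∃ T ⊆ Λ, #T = k ∧ ∀ i ∈ Λ \ T, ∀ j ∈ T, c i ≤ c j := by
  obtain ⟨T, hT, hmax⟩ := (Λ.powersetCard k).exists_max_image (fun T => ∑ j ∈ T, c j)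
    (powersetCard_nonempty.2 hk)
  obtain ⟨hTΛ, hTk⟩ := mem_powersetCard.1 hT
  refine ⟨T, hTΛ, hTk, fun i hi j hj => ?_⟩
  obtain ⟨hiΛ, hiT⟩ := mem_sdiff.1 hi
  have hi' : i ∉ T.erase j := fun h => hiT (mem_of_mem_erase h)
  have hswap := hmax (insert i (T.erase j)) (mem_powersetCard.2
    ⟨insert_subset hiΛ ((erase_subset j T).trans hTΛ),
      by rw [card_insert_of_notMem hi', card_erase_of_mem hj, ← hTk, Nat.sub_add_cancel
        (card_pos.2 ⟨j, hj⟩)]⟩)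
  rw [sum_insert hi', ← sum_erase_add T c hj] at hswap
  linarith

section Knapsack

variable {ι : Type*} [DecidableEq ι] {Λ T : Finset ι} {c u : ι → ℝ}

-- The fractional knapsack bound.
lemma sum_le_sum_of_sum_div_le_card (hT : T ⊆ Λ) (hTc : ∀ i ∈ Λ \ T, ∀ j ∈ T, c i ≤ c j)
    (hc : ∀ i, 0 ≤ c i) (hu : ∀ i ∈ Λ, 0 ≤ u i) (huc : ∀ i ∈ Λ, u i ≤ c i)
    (hk : ∑ i ∈ Λ, u i / c i ≤ #T) : ∑ i ∈ Λ, u i ≤ ∑ j ∈ T, c j := by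
  obtain ⟨θ, hθ, hθT, hθΛ⟩ : ∃ θ, 0 ≤ θ ∧ (∀ j ∈ T, θ ≤ c j) ∧ ∀ i ∈ Λ \ T, c i ≤ θ := by
    rcases T.eq_empty_or_nonempty with rfl | hTne
    · exact ⟨∑ i ∈ Λ, c i, sum_nonneg fun i _ => hc i, by simp,
        fun i hi => single_le_sum (fun i _ => hc i) (mem_sdiff.1 hi).1⟩
    · obtain ⟨j₀, hj₀, hmin⟩ := T.exists_min_image c hTne
      exact ⟨c j₀, hc j₀, hmin, fun i hi => hTc i hi j₀ hj₀⟩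
  have hout : ∀ i ∈ Λ \ T, u i ≤ θ * (u i / c i) := fun i hi => by
    have hiΛ := (mem_sdiff.1 hi).1
    rcases (hc i).eq_or_lt with h₀ | hpos
    · rw [← h₀, div_zero, mul_zero]
      linarith [huc i hiΛ]
    · calc u i = c i * (u i / c i) := by field_simp
        _ ≤ θ * (u i / c i) :=
          mul_le_mul_of_nonneg_right (hθΛ i hi) (div_nonneg (hu i hiΛ) hpos.le)
  have hin : ∀ j ∈ T, θ * (1 - u j / c j) ≤ c j - u j := fun j hj => by
    have hjΛ := hT hj
    rcases (hc j).eq_or_lt with h₀ | hpos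
    · have := hθT j hj
      have := huc j hjΛ
      rw [← h₀] at *
      simp only [div_zero, sub_zero, mul_one]
      linarith [hu j hjΛ]
    · calc θ * (1 - u j / c j) ≤ c j * (1 - u j / c j) :=
          mul_le_mul_of_nonneg_right (hθT j hj)
            (sub_nonneg.2 ((div_le_one hpos).2 (huc j hjΛ)))
        _ = c j - u j := by field_simp
  have h₁ := sum_le_sum hout
  have h₂ := sum_le_sum hin
  rw [← mul_sum] at h₁
  rw [← mul_sum, sum_sub_distrib, sum_sub_distrib, sum_const, nsmul_one] at h₂
  have hsplit := sum_sdiff hT (f := u)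
  have hsplit' := sum_sdiff hT (f := fun i => u i / c i)
  have := mul_le_mul_of_nonneg_left
    (show ∑ i ∈ Λ \ T, u i / c i ≤ #T - ∑ j ∈ T, u j / c j by linarith) hθ
  nlinarith

lemma exists_card_eq_sum_le_sum [Infinite ι] (Λ : Finset ι) (k : ℕ) (hc : ∀ i, 0 ≤ c i)
    (hu : ∀ i ∈ Λ, 0 ≤ u i) (huc : ∀ i ∈ Λ, u i ≤ c i) (hk : ∑ i ∈ Λ, u i / c i ≤ k) :
    ∃ T : Finset ι, #T = k ∧ ∑ i ∈ Λ, u i ≤ ∑ j ∈ T, c j := by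
  by_cases hkΛ : k ≤ #Λ
  · obtain ⟨T, hT, hTk, hTc⟩ := Λ.exists_subset_card_eq_forall_le c hkΛ
    exact ⟨T, hTk, sum_le_sum_of_sum_div_le_card hT hTc hc hu huc (by rwa [hTk])⟩
  · obtain ⟨T, hΛT, hTk⟩ := Infinite.exists_superset_card_eq Λ k (by omega)
    exact ⟨T, hTk, (sum_le_sum huc).trans
      (sum_le_sum_of_subset_of_nonneg hΛT fun i _ _ => hc i)⟩

end Knapsack

lemma StrictMonoOn.isAntichain_of_eq {α β : Type*} [PartialOrder α] [Preorder β] {φ : α → β}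
    {S A : Set α} (hφ : StrictMonoOn φ S) (hAS : A ⊆ S) {z : β} (hA : ∀ p ∈ A, φ p = z) :
    IsAntichain (· ≤ ·) A := fun p hp q hq hne hle => by
  have := hφ (hAS hp) (hAS hq) (lt_of_le_of_ne hle hne)
  rw [hA p hp, hA q hq] at this
  exact lt_irrefl z this

lemma strictMono_fst_add_snd : StrictMono fun p : ℤ × ℤ => p.1 + p.2 := fun p q hpq => by
  show p.1 + p.2 < q.1 + q.2
  rcases Prod.lt_iff.1 hpq with h | h <;> omega

lemma isAntichain_of_fst_add_snd_eq {S : Set (ℤ × ℤ)} {t : ℤ} (hS : ∀ p ∈ S, p.1 + p.2 = t) :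
    IsAntichain (· ≤ ·) S :=
  (strictMono_fst_add_snd.strictMonoOn Set.univ).isAntichain_of_eq (Set.subset_univ S) hS

lemma strictMonoOn_add_prod {x y : ℤ → ℤ} {S S' : Set ℤ} (hx : StrictMonoOn x S)
    (hy : StrictMonoOn y S') : StrictMonoOn (fun p : ℤ × ℤ => x p.1 + y p.2) (S ×ˢ S') := by
  rintro ⟨p₁, p₂⟩ ⟨hp₁, hp₂⟩ ⟨q₁, q₂⟩ ⟨hq₁, hq₂⟩ hpq
  rcases Prod.lt_iff.1 hpq with ⟨h₁, h₂⟩ | ⟨h₁, h₂⟩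
  · exact add_lt_add_of_lt_of_le (hx hp₁ hq₁ h₁) (hy.monotoneOn hp₂ hq₂ h₂)
  · exact add_lt_add_of_le_of_lt (hx.monotoneOn hp₁ hq₁ h₁) (hy hp₂ hq₂ h₂)

lemma sum_eq_sum_image_fst {M : Type*} [AddCommMonoid M] {U : Finset (ℤ × ℤ)} {t : ℤ}
    (hU : ∀ p ∈ U, p.1 + p.2 = t) (F : ℤ → ℤ → M) :
    ∑ p ∈ U, F p.1 p.2 = ∑ r ∈ U.image Prod.fst, F r (t - r) := by
  have hinj : Set.InjOn Prod.fst (U : Set (ℤ × ℤ)) := fun p hp q hq h =>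
    Prod.ext h (by linarith [hU p hp, hU q hq])
  rw [sum_image hinj]
  exact sum_congr rfl fun p hp => by rw [← hU p hp, add_sub_cancel_left]

def gridUpShadow (U : Finset (ℤ × ℤ)) : Finset (ℤ × ℤ) :=
  U.image (· + (1, 0)) ∪ U.image (· + (0, 1))

lemma exists_lt_of_mem_gridUpShadow {U : Finset (ℤ × ℤ)} {q : ℤ × ℤ} (hq : q ∈ gridUpShadow U) :
    ∃ p ∈ U, p < q ∧ q.1 + q.2 = p.1 + p.2 + 1 := by
  simp only [gridUpShadow, mem_union, mem_image] at hq
  rcases hq with ⟨p, hp, rfl⟩ | ⟨p, hp, rfl⟩ <;>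
    exact ⟨p, hp, Prod.lt_iff.2 (by simp), by simp; ring⟩

lemma image_fst_gridUpShadow (U : Finset (ℤ × ℤ)) :
    (gridUpShadow U).image Prod.fst = U.image Prod.fst ∪ (U.image Prod.fst).image (· + 1) := by
  simp only [gridUpShadow, image_union, image_image]
  rw [union_comm]
  congr 2
  funext p
  simp

structure IsLogConcaveSeq (a : ℤ → ℝ) (m : ℤ) : Prop where
  pos : ∀ r ∈ Icc 0 m, 0 < a r
  eq_zero : ∀ r ∉ Icc 0 m, a r = 0
  mul_le_sq : ∀ i, a (i - 1) * a (i + 1) ≤ a i ^ 2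

namespace IsLogConcaveSeq

variable {a : ℤ → ℝ} {m : ℤ}

lemma nonneg (ha : IsLogConcaveSeq a m) (r : ℤ) : 0 ≤ a r := by
  by_cases hr : r ∈ Icc 0 m
  · exact (ha.pos r hr).le
  · exact (ha.eq_zero r hr).ge

lemma mem_Icc_of_ne_zero (ha : IsLogConcaveSeq a m) {r : ℤ} (hr : a r ≠ 0) : r ∈ Icc 0 m := by
  by_contra h
  exact hr (ha.eq_zero r h)

lemma mul_le_mul_of_le (ha : IsLogConcaveSeq a m) {p q : ℤ} (hpq : p ≤ q) :
    a p * a (q + 1) ≤ a (p + 1) * a q := by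
  by_cases hsupp : p ∈ Icc 0 m ∧ q + 1 ∈ Icc 0 m
  swap
  · have hzero : a p * a (q + 1) = 0 := by
      rcases not_and_or.1 hsupp with h | h <;> simp [ha.eq_zero _ h]
    rw [hzero]
    exact mul_nonneg (ha.nonneg _) (ha.nonneg _)
  obtain ⟨hp, hq⟩ := hsupp
  induction q, hpq using Int.leInduction with
  | base => rw [mul_comm]
  | succ q hpq ih =>
    simp only [mem_Icc] at hp hq ih
    have hq₀ : 0 < a q := ha.pos q (by simp only [mem_Icc]; omega)
    have hsq := ha.mul_le_sq (q + 1)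
    rw [add_sub_cancel_right] at hsq
    refine le_of_mul_le_mul_left ?_ hq₀
    calc a q * (a p * a (q + 1 + 1)) = a p * (a q * a (q + 1 + 1)) := by ring
      _ ≤ a p * a (q + 1) ^ 2 := mul_le_mul_of_nonneg_left hsq (ha.nonneg p)
      _ = a (q + 1) * (a p * a (q + 1)) := by ring
      _ ≤ a (q + 1) * (a (p + 1) * a q) :=
        mul_le_mul_of_nonneg_left (ih ⟨by omega, by omega⟩) (ha.nonneg _)
      _ = a q * (a (p + 1) * a (q + 1)) := by ring

end IsLogConcaveSeq

lemma conv_eq_sum_of_eq_zero {a : ℤ → ℝ} {s : Finset ℤ} (hs : ∀ r ∉ s, a r = 0) (b : ℤ → ℝ)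
    (t : ℤ) : conv a b t = ∑ r ∈ s, a r * b (t - r) :=
  tsum_eq_sum fun r hr => by rw [hs r hr, zero_mul]

section FiniteSupportConv

open Pointwise

variable {f g : ℤ → ℝ} {F G : Finset ℤ} (hf : ∀ i ∉ F, f i = 0) (hg : ∀ j ∉ G, g j = 0)
include hf hg

lemma conv_eq_sum_filter_product (z : ℤ) :
    conv f g z = ∑ q ∈ F ×ˢ G with q.1 + q.2 = z, f q.1 * g q.2 := by
  rw [conv_eq_sum_of_eq_zero hf, sum_filter, sum_product]
  refine sum_congr rfl fun i _ => ?_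
  simp_rw [← eq_sub_iff_add_eq', sum_ite_eq']
  split_ifs with h
  · rfl
  · rw [hg _ h, mul_zero]

lemma sum_conv_eq_sum_filter_product (s : Finset ℤ) :
    ∑ z ∈ s, conv f g z = ∑ q ∈ F ×ˢ G with q.1 + q.2 ∈ s, f q.1 * g q.2 := by
  simp_rw [conv_eq_sum_filter_product hf hg, sum_fiberwise_eq_sum_filter]

lemma tsum_conv_eq_mul : ∑' z, conv f g z = (∑ i ∈ F, f i) * ∑ j ∈ G, g j := by
  have hvanish : ∀ z ∉ F + G, conv f g z = 0 := fun z hz => by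
    rw [conv_eq_sum_filter_product hf hg]
    refine sum_eq_zero fun q hq => ?_
    obtain ⟨hqFG, rfl⟩ := mem_filter.1 hq
    exact (hz (add_mem_add (mem_product.1 hqFG).1 (mem_product.1 hqFG).2)).elim
  rw [tsum_eq_sum hvanish, sum_conv_eq_sum_filter_product hf hg,
    filter_true_of_mem fun q hq => add_mem_add (mem_product.1 hq).1 (mem_product.1 hq).2,
    sum_product, sum_mul_sum]

end FiniteSupportConv

section LogConcaveConv

variable {a b : ℤ → ℝ} {m n : ℤ} (ha : IsLogConcaveSeq a m) (hb : IsLogConcaveSeq b n)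
include ha hb

lemma sum_le_conv (R : Finset ℤ) (t : ℤ) : ∑ r ∈ R, a r * b (t - r) ≤ conv a b t :=
  Summable.sum_le_tsum R (fun r _ => mul_nonneg (ha.nonneg r) (hb.nonneg _))
    (summable_of_ne_finset_zero (s := Icc 0 m) fun r hr => by rw [ha.eq_zero r hr, zero_mul])

lemma conv_nonneg (t : ℤ) : 0 ≤ conv a b t := by
  simpa using sum_le_conv ha hb ∅ t

lemma conv_succ_pos {t : ℤ} (ht₀ : 0 < conv a b t) (ht : t < m + n) :
    0 < conv a b (t + 1) := by
  rw [conv_eq_sum_of_eq_zero ha.eq_zero] at ht₀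
  obtain ⟨r, -, hr⟩ := exists_lt_of_sum_lt (f := fun _ => (0 : ℝ)) (by simpa using ht₀)
  have hr₁ := ha.mem_Icc_of_ne_zero (left_ne_zero_of_mul hr.ne')
  have hr₂ := hb.mem_Icc_of_ne_zero (right_ne_zero_of_mul hr.ne')
  simp only [mem_Icc] at hr₁ hr₂
  by_cases hrm : r < m
  · calc 0 < a (r + 1) * b (t + 1 - (r + 1)) :=
          mul_pos (ha.pos _ (by simp; omega)) (hb.pos _ (by simp; omega))
      _ ≤ conv a b (t + 1) := by simpa using sum_le_conv ha hb {r + 1} (t + 1)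
  · calc 0 < a r * b (t + 1 - r) :=
          mul_pos (ha.pos _ (by simp; omega)) (hb.pos _ (by simp; omega))
      _ ≤ conv a b (t + 1) := by simpa using sum_le_conv ha hb {r} (t + 1)

/- With `C = conv a b t`, `C' = conv a b (t + 1)` and `F`, `G` the prefix sums of the weights
`a r * b (t - r)`, `a r * b (t + 1 - r)` of the levels `t`, `t + 1`, this lemma and the next say
that the two levels interlace: `G ρ / C' ≤ F ρ / C ≤ G (ρ + 1) / C'`. -/
lemma conv_mul_sum_filter_le (t ρ : ℤ) :
    conv a b t * ∑ r ∈ Icc 0 m with r ≤ ρ, a r * b (t + 1 - r)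
      ≤ conv a b (t + 1) * ∑ r ∈ Icc 0 m with r ≤ ρ, a r * b (t - r) := by
  have hC := conv_eq_sum_of_eq_zero ha.eq_zero b t
  have hC' := conv_eq_sum_of_eq_zero ha.eq_zero b (t + 1)
  rw [← sum_filter_add_sum_filter_not _ (· ≤ ρ)] at hC hC'
  have key : (∑ r ∈ Icc 0 m with ¬r ≤ ρ, a r * b (t - r)) *
        ∑ r ∈ Icc 0 m with r ≤ ρ, a r * b (t + 1 - r)
      ≤ (∑ r ∈ Icc 0 m with ¬r ≤ ρ, a r * b (t + 1 - r)) *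
        ∑ r ∈ Icc 0 m with r ≤ ρ, a r * b (t - r) := by
    rw [sum_mul_sum, sum_mul_sum]
    refine sum_le_sum fun j hj => sum_le_sum fun i hi => ?_
    simp only [mem_filter] at hi hj
    have h := hb.mul_le_mul_of_le (show t - j ≤ t - i by omega)
    rw [show t - i + 1 = t + 1 - i by ring, show t - j + 1 = t + 1 - j by ring] at h
    calc _ = a j * a i * (b (t - j) * b (t + 1 - i)) := by ring
      _ ≤ a j * a i * (b (t + 1 - j) * b (t - i)) :=
        mul_le_mul_of_nonneg_left h (mul_nonneg (ha.nonneg j) (ha.nonneg i))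
      _ = _ := by ring
  linear_combination key + (∑ r ∈ Icc 0 m with r ≤ ρ, a r * b (t + 1 - r)) * hC
    - (∑ r ∈ Icc 0 m with r ≤ ρ, a r * b (t - r)) * hC'

lemma conv_succ_mul_sum_filter_le (t ρ : ℤ) :
    conv a b (t + 1) * ∑ r ∈ Icc 0 m with r ≤ ρ, a r * b (t - r)
      ≤ conv a b t * ∑ r ∈ Icc 0 m with r ≤ ρ + 1, a r * b (t + 1 - r) := by
  have hC := conv_eq_sum_of_eq_zero ha.eq_zero b t
  have hC' := conv_eq_sum_of_eq_zero ha.eq_zero b (t + 1)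
  rw [← sum_filter_add_sum_filter_not _ (· ≤ ρ)] at hC
  rw [← sum_filter_add_sum_filter_not _ (· ≤ ρ + 1)] at hC'
  have key : (∑ r ∈ Icc 0 m with ¬r ≤ ρ + 1, a r * b (t + 1 - r)) *
        ∑ r ∈ Icc 0 m with r ≤ ρ, a r * b (t - r)
      ≤ (∑ r ∈ Icc 0 m with ¬r ≤ ρ, a r * b (t - r)) *
        ∑ r ∈ Icc 0 m with r ≤ ρ + 1, a r * b (t + 1 - r) := by
    rw [sum_mul_sum, sum_mul_sum, ← sum_product', ← sum_product']
    refine sum_le_sum_of_injOn (fun q => (q.1 - 1, q.2 + 1)) ?_ ?_ ?_ ?_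
    · intro q hq
      simp only [mem_product, mem_filter, mem_Icc] at hq ⊢
      omega
    · intro q _ q' _ h
      simp only [Prod.ext_iff] at h ⊢
      omega
    · rintro ⟨j, i⟩ hq
      simp only [mem_product, mem_filter, mem_Icc] at hq
      have h := ha.mul_le_mul_of_le (show i ≤ j - 1 by omega)
      rw [sub_add_cancel] at h
      calc _ = b (t + 1 - j) * b (t - i) * (a i * a j) := by ring
        _ ≤ b (t + 1 - j) * b (t - i) * (a (i + 1) * a (j - 1)) :=
          mul_le_mul_of_nonneg_left h (mul_nonneg (hb.nonneg _) (hb.nonneg _))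
        _ = _ := by ring_nf
    · intro q _
      exact mul_nonneg (mul_nonneg (ha.nonneg _) (hb.nonneg _))
        (mul_nonneg (ha.nonneg _) (hb.nonneg _))
  linear_combination key + (∑ r ∈ Icc 0 m with r ≤ ρ, a r * b (t - r)) * hC'
    - (∑ r ∈ Icc 0 m with r ≤ ρ + 1, a r * b (t + 1 - r)) * hC

lemma conv_succ_mul_sum_le (R : Finset ℤ) (t : ℤ) :
    conv a b (t + 1) * ∑ r ∈ R, a r * b (t - r)
      ≤ conv a b t * ∑ r ∈ R ∪ R.image (· + 1), a r * b (t + 1 - r) := by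
  set S := R ∪ R.image (· + 1)
  have hS : ∀ ρ, ρ + 1 ∈ S ↔ ρ + 1 ∈ R ∨ ρ ∈ R := by simp [S]
  have hbot : ∀ (X : Finset ℤ) (u : ℤ → ℝ), ∑ r ∈ X with r ≤ -1, a r * u r = 0 :=
    fun X u => sum_eq_zero fun r hr => by
      rw [ha.eq_zero r (by simp only [mem_filter] at hr; simp; omega), zero_mul]
  have hext : ∀ ρ (x : ℝ), (if ρ ∈ Icc 0 m then a ρ * x else 0) = a ρ * x := fun ρ x => by
    split_ifs with h
    · rfl
    · rw [ha.eq_zero _ h, zero_mul]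
  -- Invariant of a left-to-right scan: inside a run of `R` the deficit is at most `C' F ρ - C G ρ`.
  have key : ∀ ρ, -1 ≤ ρ →
      conv a b (t + 1) * ∑ r ∈ R with r ≤ ρ, a r * b (t - r)
        ≤ conv a b t * ∑ r ∈ S with r ≤ ρ, a r * b (t + 1 - r)
          + if ρ ∈ R then conv a b (t + 1) * ∑ r ∈ Icc 0 m with r ≤ ρ, a r * b (t - r)
              - conv a b t * ∑ r ∈ Icc 0 m with r ≤ ρ, a r * b (t + 1 - r) else 0 := by
    intro ρ hρ
    induction ρ, hρ using Int.leInduction with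
    | base => simp [hbot]
    | succ ρ _ ih =>
      have h₁ := conv_mul_sum_filter_le ha hb t ρ
      have h₂ := conv_succ_mul_sum_filter_le ha hb t ρ
      simp only [sum_filter_le_add_one, hext] at h₂ ⊢
      by_cases hρ₁ : ρ + 1 ∈ R <;> by_cases hρ : ρ ∈ R <;>
        simp only [hρ₁, hρ, hS, if_true, if_false, or_true, or_false] at ih ⊢ <;>
        linarith
  have htop : ∀ (X : Finset ℤ) (u : ℤ → ℝ),
      ∑ r ∈ X with r ≤ max m (-1), a r * u r = ∑ r ∈ X, a r * u r :=
    fun X u => sum_filter_of_ne fun r _ hr => by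
      have := ha.mem_Icc_of_ne_zero (left_ne_zero_of_mul hr)
      simp only [mem_Icc] at this
      omega
  have := key (max m (-1)) (le_max_right _ _)
  simp only [htop, ← conv_eq_sum_of_eq_zero ha.eq_zero, mul_comm (conv a b (t + 1)), sub_self,
    ite_self, add_zero] at this
  linarith

lemma sum_le_conv_of_fst_add_snd_eq {U : Finset (ℤ × ℤ)} {t : ℤ}
    (hU : ∀ p ∈ U, p.1 + p.2 = t) : ∑ p ∈ U, a p.1 * b p.2 ≤ conv a b t := by
  rw [sum_eq_sum_image_fst hU fun r s => a r * b s]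
  exact sum_le_conv ha hb _ t

lemma sum_div_conv_le_sum_div_conv_gridUpShadow {U : Finset (ℤ × ℤ)} {t : ℤ}
    (hU : ∀ p ∈ U, p.1 + p.2 = t) (ht : t < m + n) :
    ∑ p ∈ U, a p.1 * b p.2 / conv a b (p.1 + p.2)
      ≤ ∑ q ∈ gridUpShadow U, a q.1 * b q.2 / conv a b (q.1 + q.2) := by
  have hU' : ∀ q ∈ gridUpShadow U, q.1 + q.2 = t + 1 := fun q hq => by
    obtain ⟨p, hp, -, hq⟩ := exists_lt_of_mem_gridUpShadow hq
    rw [hq, hU p hp]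
  have hmatch := conv_succ_mul_sum_le ha hb (U.image Prod.fst) t
  rw [← sum_eq_sum_image_fst hU fun r s => a r * b s, ← image_fst_gridUpShadow,
    ← sum_eq_sum_image_fst hU' fun r s => a r * b s] at hmatch
  have hleft : ∑ p ∈ U, a p.1 * b p.2 / conv a b (p.1 + p.2)
      = (∑ p ∈ U, a p.1 * b p.2) / conv a b t := by
    rw [sum_div]
    exact sum_congr rfl fun p hp => by rw [hU p hp]
  have hright : ∑ q ∈ gridUpShadow U, a q.1 * b q.2 / conv a b (q.1 + q.2)
      = (∑ q ∈ gridUpShadow U, a q.1 * b q.2) / conv a b (t + 1) := by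
    rw [sum_div]
    exact sum_congr rfl fun q hq => by rw [hU' q hq]
  rw [hleft, hright]
  rcases (conv_nonneg ha hb t).eq_or_lt with h₀ | hpos
  · rw [← h₀, div_zero]
    exact div_nonneg (sum_nonneg fun q _ => mul_nonneg (ha.nonneg _) (hb.nonneg _))
      (conv_nonneg ha hb _)
  · rw [div_le_div_iff₀ hpos (conv_succ_pos ha hb hpos ht)]
    linarith

-- Replace the lowest level `U` of `A` by its upper shadow.
lemma exists_antichain_sum_div_conv_le {A : Finset (ℤ × ℤ)}
    (hA : IsAntichain (· ≤ ·) (A : Set (ℤ × ℤ))) {t : ℤ} (hAt : ∀ p ∈ A, t ≤ p.1 + p.2)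
    (ht : t < m + n) :
    ∃ A' : Finset (ℤ × ℤ), IsAntichain (· ≤ ·) (A' : Set (ℤ × ℤ)) ∧
      (∀ p ∈ A', t + 1 ≤ p.1 + p.2) ∧
      ∑ p ∈ A, a p.1 * b p.2 / conv a b (p.1 + p.2)
        ≤ ∑ p ∈ A', a p.1 * b p.2 / conv a b (p.1 + p.2) := by
  set U := A.filter (fun p => p.1 + p.2 = t)
  have hU : ∀ p ∈ U, p.1 + p.2 = t := fun p hp => (mem_filter.1 hp).2
  have hshadow : ∀ q ∈ gridUpShadow U, ∃ p ∈ A, p < q := fun q hq => by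
    obtain ⟨p, hp, hpq, -⟩ := exists_lt_of_mem_gridUpShadow hq
    exact ⟨p, (mem_filter.1 hp).1, hpq⟩
  have hshadow_level : ∀ q ∈ gridUpShadow U, q.1 + q.2 = t + 1 := fun q hq => by
    obtain ⟨p, hp, -, hq⟩ := exists_lt_of_mem_gridUpShadow hq
    rw [hq, hU p hp]
  have hrest : ∀ p ∈ A \ U, t + 1 ≤ p.1 + p.2 := fun p hp => by
    simp only [U, mem_sdiff, mem_filter, not_and] at hp
    have := hAt p hp.1
    have := hp.2 hp.1
    omega
  have hdisj : Disjoint (A \ U) (gridUpShadow U) := disjoint_left.2 fun q hq hq' => by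
    obtain ⟨p, hp, hpq⟩ := hshadow q hq'
    exact hA hp (mem_sdiff.1 hq).1 hpq.ne hpq.le
  refine ⟨A \ U ∪ gridUpShadow U, ?_, ?_, ?_⟩
  · rw [coe_union, isAntichain_union]
    refine ⟨hA.subset (by simp), isAntichain_of_fst_add_snd_eq hshadow_level,
      fun p hp q hq hne => ⟨fun hpq => ?_, fun hqp => ?_⟩⟩
    · have : p.1 + p.2 < q.1 + q.2 := strictMono_fst_add_snd (lt_of_le_of_ne hpq hne)
      have := hrest p hp
      have := hshadow_level q hq
      omega
    · obtain ⟨p', hp', hp'q⟩ := hshadow q hq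
      exact hA hp' (mem_sdiff.1 hp).1 (hp'q.trans_le hqp).ne (hp'q.le.trans hqp)
  · intro p hp
    rcases mem_union.1 hp with hp | hp
    · exact hrest p hp
    · exact (hshadow_level p hp).ge
  · have hUA : U ⊆ A := filter_subset _ _
    rw [sum_union hdisj, ← sum_sdiff hUA]
    exact add_le_add_right (sum_div_conv_le_sum_div_conv_gridUpShadow ha hb hU ht) _

theorem sum_div_conv_le_one {A : Finset (ℤ × ℤ)} (hA : IsAntichain (· ≤ ·) (A : Set (ℤ × ℤ))) :
    ∑ p ∈ A, a p.1 * b p.2 / conv a b (p.1 + p.2) ≤ 1 := by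
  suffices h : ∀ t ≤ m + n, ∀ A : Finset (ℤ × ℤ), IsAntichain (· ≤ ·) (A : Set (ℤ × ℤ)) →
      (∀ p ∈ A, t ≤ p.1 + p.2) → ∑ p ∈ A, a p.1 * b p.2 / conv a b (p.1 + p.2) ≤ 1 by
    obtain ⟨t, ht⟩ := (A.image fun p => p.1 + p.2).bddBelow
    exact h (min t (m + n)) (min_le_right _ _) A hA fun p hp =>
      (min_le_left _ _).trans (ht (mem_image_of_mem _ hp))
  intro t ht
  induction t, ht using Int.leInductionDown with
  | base =>
    intro A _ hAt
    have htop : ∀ p ∈ A, a p.1 * b p.2 / conv a b (p.1 + p.2) ≠ 0 → p.1 + p.2 = m + n :=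
      fun p hp hne => by
        obtain ⟨hp₁, hp₂⟩ := mul_ne_zero_iff.1 (div_ne_zero_iff.1 hne).1
        have h₁ := ha.mem_Icc_of_ne_zero hp₁
        have h₂ := hb.mem_Icc_of_ne_zero hp₂
        simp only [mem_Icc] at h₁ h₂
        linarith [hAt p hp]
    have hlevel : ∀ p ∈ A.filter (fun p : ℤ × ℤ => p.1 + p.2 = m + n), p.1 + p.2 = m + n :=
      fun p hp => (mem_filter.1 hp).2
    rw [← sum_filter_of_ne htop, sum_congr rfl fun p hp => by rw [hlevel p hp], ← sum_div]
    exact div_le_one_of_le₀ (sum_le_conv_of_fst_add_snd_eq ha hb hlevel) (conv_nonneg ha hb _)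
  | pred t ht ih =>
    intro A hA hAt
    obtain ⟨A', hA', hA't, hle⟩ := exists_antichain_sum_div_conv_le ha hb hA hAt (by omega)
    exact hle.trans (ih A' hA' fun p hp => by linarith [hA't p hp])

theorem exists_card_eq_sum_le_sum_conv {x y : ℤ → ℤ} (hx : StrictMonoOn x (Set.Icc 0 m))
    (hy : StrictMonoOn y (Set.Icc 0 n)) (s : Finset ℤ) :
    ∃ T : Finset ℤ, #T = #s ∧
      ∑ p ∈ Icc 0 m ×ˢ Icc 0 n with x p.1 + y p.2 ∈ s, a p.1 * b p.2
        ≤ ∑ t ∈ T, conv a b t := by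
  set P := (Icc 0 m ×ˢ Icc 0 n).filter fun p => x p.1 + y p.2 ∈ s
  have hLYM : ∑ p ∈ P, a p.1 * b p.2 / conv a b (p.1 + p.2) ≤ #s := by
    rw [← sum_fiberwise_of_maps_to (s := P) (t := s) (g := fun p : ℤ × ℤ => x p.1 + y p.2)
      fun p hp => (mem_filter.1 hp).2]
    calc _ ≤ ∑ z ∈ s, (1 : ℝ) := sum_le_sum fun z _ => sum_div_conv_le_one ha hb <|
            (strictMonoOn_add_prod hx hy).isAntichain_of_eq
              (fun p hp => by
                obtain ⟨h₁, h₂⟩ := mem_product.1 (mem_filter.1 (mem_filter.1 hp).1).1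
                exact ⟨mem_Icc.1 h₁, mem_Icc.1 h₂⟩)
              fun p hp => (mem_filter.1 hp).2
      _ = #s := by simp
  set Λ := P.image fun p => p.1 + p.2
  have hmaps : ∀ p ∈ P, p.1 + p.2 ∈ Λ := fun p hp => mem_image_of_mem _ hp
  have hlevel : ∀ t, ∀ p ∈ P.filter (fun p : ℤ × ℤ => p.1 + p.2 = t), p.1 + p.2 = t :=
    fun t p hp => (mem_filter.1 hp).2
  obtain ⟨T, hT, hle⟩ := exists_card_eq_sum_le_sum Λ #s (conv_nonneg ha hb)
    (u := fun t => ∑ p ∈ P with p.1 + p.2 = t, a p.1 * b p.2)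
    (fun t _ => sum_nonneg fun p _ => mul_nonneg (ha.nonneg _) (hb.nonneg _))
    (fun t _ => sum_le_conv_of_fst_add_snd_eq ha hb (hlevel t)) <| by
      calc _ = ∑ t ∈ Λ, ∑ p ∈ P with p.1 + p.2 = t, a p.1 * b p.2 / conv a b (p.1 + p.2) :=
            sum_congr rfl fun t _ => by
              rw [sum_div]
              exact sum_congr rfl fun p hp => by rw [hlevel t p hp]
        _ ≤ #s := by rwa [sum_fiberwise_of_maps_to hmaps]
  exact ⟨T, hT, by rwa [sum_fiberwise_of_maps_to hmaps] at hle⟩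

end LogConcaveConv

section SqueezedRearrangement

variable {f g : ℤ → ℝ} (hf : (Function.support f).Finite) (hg : (Function.support g).Finite)

/-- The increasing enumeration `r ↦ x_r` of the support of `f`, so that `f^#(r) = f(x_r)`. -/
def supportEnum (r : ℤ) : ℤ :=
  if h : 0 ≤ r ∧ r.toNat < #hf.toFinset then hf.toFinset.orderEmbOfFin rfl ⟨r.toNat, h.2⟩ else 0

lemma supportEnum_of_mem {r : ℤ} (hr : r ∈ Icc 0 ((#hf.toFinset : ℤ) - 1)) :
    supportEnum hf r
      = hf.toFinset.orderEmbOfFin rfl ⟨r.toNat, by simp only [mem_Icc] at hr; omega⟩ := by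
  simp only [mem_Icc] at hr
  rw [supportEnum, dif_pos ⟨hr.1, by omega⟩]

lemma hashFn_of_mem {r : ℤ} (hr : r ∈ Icc 0 ((#hf.toFinset : ℤ) - 1)) :
    hashFn f hf r = f (supportEnum hf r) := by
  simp only [mem_Icc] at hr
  rw [hashFn, dif_pos ⟨hr.1, by omega⟩, supportEnum_of_mem hf (by simp only [mem_Icc]; omega),
    orderEmbOfFin_apply]
  rfl

lemma hashFn_of_notMem {r : ℤ} (hr : r ∉ Icc 0 ((#hf.toFinset : ℤ) - 1)) :
    hashFn f hf r = 0 := by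
  simp only [mem_Icc] at hr
  rw [hashFn, dif_neg (by omega)]

lemma supportEnum_mem {r : ℤ} (hr : r ∈ Icc 0 ((#hf.toFinset : ℤ) - 1)) :
    supportEnum hf r ∈ hf.toFinset := by
  rw [supportEnum_of_mem hf hr]
  exact orderEmbOfFin_mem _ _ _

lemma strictMonoOn_supportEnum :
    StrictMonoOn (supportEnum hf) (Set.Icc 0 ((#hf.toFinset : ℤ) - 1)) := by
  rintro p hp q hq hpq
  rw [supportEnum_of_mem hf (mem_Icc.2 hp), supportEnum_of_mem hf (mem_Icc.2 hq)]
  obtain ⟨hp₀, -⟩ := hp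
  exact (hf.toFinset.orderEmbOfFin rfl).strictMono (Fin.mk_lt_mk.2 (by omega))

lemma sum_comp_supportEnum {M : Type*} [AddCommMonoid M] (F : ℤ → M) :
    ∑ r ∈ Icc 0 ((#hf.toFinset : ℤ) - 1), F (supportEnum hf r) = ∑ v ∈ hf.toFinset, F v := by
  refine sum_nbij _ (fun r hr => supportEnum_mem hf hr)
    (strictMonoOn_supportEnum hf |>.injOn.mono (by simp)) (fun v hv => ?_) fun _ _ => rfl
  obtain ⟨i, rfl⟩ : v ∈ Set.range (hf.toFinset.orderEmbOfFin rfl) := by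
    rwa [range_orderEmbOfFin]
  have hi : (i : ℤ) ∈ Icc 0 ((#hf.toFinset : ℤ) - 1) := by
    simp only [mem_Icc]
    omega
  exact ⟨i, hi, by simp only [supportEnum_of_mem hf hi, Int.toNat_natCast]⟩

lemma isLogConcaveSeq_hashFn (hf₀ : ∀ i, 0 ≤ f i) (hlc : HashLogConcave f hf) :
    IsLogConcaveSeq (hashFn f hf) ((#hf.toFinset : ℤ) - 1) where
  pos r hr := by
    rw [hashFn_of_mem hf hr]
    exact (hf₀ _).lt_of_ne' ((Set.Finite.mem_toFinset hf).1 (supportEnum_mem hf hr))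
  eq_zero r hr := hashFn_of_notMem hf hr
  mul_le_sq := hlc

include hf hg

lemma sum_conv_eq_sum_hashFn (s : Finset ℤ) :
    ∑ z ∈ s, conv f g z
      = ∑ p ∈ Icc 0 ((#hf.toFinset : ℤ) - 1) ×ˢ Icc 0 ((#hg.toFinset : ℤ) - 1)
          with supportEnum hf p.1 + supportEnum hg p.2 ∈ s, hashFn f hf p.1 * hashFn g hg p.2 := by
  rw [sum_conv_eq_sum_filter_product (fun i (hi : i ∉ hf.toFinset) => by simpa using hi)
      (fun j (hj : j ∉ hg.toFinset) => by simpa using hj),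
    sum_filter, sum_filter, sum_product, sum_product, ← sum_comp_supportEnum hf]
  refine sum_congr rfl fun r hr => ?_
  rw [← sum_comp_supportEnum hg]
  refine sum_congr rfl fun r' hr' => ?_
  rw [hashFn_of_mem hf hr, hashFn_of_mem hg hr']

lemma tsum_conv_hashFn : ∑' z, conv (hashFn f hf) (hashFn g hg) z = ∑' z, conv f g z := by
  rw [tsum_conv_eq_mul (fun _ => hashFn_of_notMem hf) (fun _ => hashFn_of_notMem hg),
    tsum_conv_eq_mul (fun i (hi : i ∉ hf.toFinset) => by simpa using hi)
      (fun j (hj : j ∉ hg.toFinset) => by simpa using hj),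
    ← sum_comp_supportEnum hf, ← sum_comp_supportEnum hg]
  congr 1 <;> exact sum_congr rfl fun r hr => hashFn_of_mem _ hr

end SqueezedRearrangement

theorem conv_majorized_hash_conv (f₁ f₂ : ℤ → ℝ)
    (h₁ : (Function.support f₁).Finite) (h₂ : (Function.support f₂).Finite)
    (hp₁ : IsPMF f₁) (hp₂ : IsPMF f₂)
    (hlc₁ : HashLogConcave f₁ h₁) (hlc₂ : HashLogConcave f₂ h₂) :
    Majorized (conv f₁ f₂) (conv (hashFn f₁ h₁) (hashFn f₂ h₂)) := by
  refine ⟨fun s => ?_, (tsum_conv_hashFn h₁ h₂).symm⟩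
  obtain ⟨T, hT, hle⟩ := exists_card_eq_sum_le_sum_conv (isLogConcaveSeq_hashFn h₁ hp₁.1 hlc₁)
    (isLogConcaveSeq_hashFn h₂ hp₂.1 hlc₂) (strictMonoOn_supportEnum h₁)
    (strictMonoOn_supportEnum h₂) s
  exact ⟨T, hT, (sum_conv_eq_sum_hashFn h₁ h₂ s).trans_le hle⟩
end
end

section
/- If A₁ and A₂ are finite nonempty subsets of ℤ with indicator functions 1_{A₁}, 1_{A₂}, then the convolution 1_{A₁} ⋆ 1_{A₂} is majorized by 1_{I₁} ⋆ 1_{I₂}, where I₁ = {0,1,...,|A₁|−1} and I₂ = {0,1,...,|A₂|−1}. -/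
noncomputable section

/-- Real-valued indicator function of a finite set of integers. -/
def ind (A : Finset ℤ) : ℤ → ℝ := fun i => if i ∈ A then 1 else 0

/-- Indicator of the interval `{0, 1, …, n-1}`. -/
def indInterval (n : ℕ) : ℤ → ℝ := fun i => if 0 ≤ i ∧ i < (n : ℤ) then 1 else 0

/-!
Enumerate `A₁` and `A₂` increasingly as `a₀ < ⋯ < a_{n₁-1}` and `b₀ < ⋯ < b_{n₂-1}`. The index
grid `Fin n₁ × Fin n₂` splits into the hooks `H_t = {(i, j) | min i (n₂ - 1 - j) = t}`,
`t < min n₁ n₂`, each a chain for the componentwise order. Since `(i, j) ↦ a_i + b_j` is strictly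
increasing, it is injective on every hook, so at most `min k |H_t|` pairs of `H_t` have their sum in
a given set `s` of `k` integers. For the intervals the sums along `H_t` run exactly once through
`[t, n₁ + n₂ - 1 - t)`, and a window of `k` consecutive integers centred like these intervals meets
each of them in at least `min k |H_t|` points. As `∑_{x ∈ s} (1_{A₁} ⋆ 1_{A₂}) x` counts the pairs
of `A₁ × A₂` with sum in `s`, that window is the competitor for `s` in the majorization.
-/

open Finset

section
variable {α β γ : Type*}

theorem StrictMono.add_prodMap [PartialOrder α] [PartialOrder β] [AddCommMonoid γ]
    [PartialOrder γ] [IsOrderedCancelAddMonoid γ] {f : α → γ} {g : β → γ} (hf : StrictMono f)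
    (hg : StrictMono g) : StrictMono fun p : α × β => f p.1 + g p.2 := by
  intro p q hpq
  rcases Prod.lt_iff.mp hpq with ⟨h₁, h₂⟩ | ⟨h₁, h₂⟩
  · exact add_lt_add_of_lt_of_le (hf h₁) (hg.monotone h₂)
  · exact add_lt_add_of_le_of_lt (hf.monotone h₁) (hg h₂)

theorem StrictMono.injOn_of_isChain [PartialOrder α] [Preorder β] {f : α → β}
    (hf : StrictMono f) {s : Set α} (hs : IsChain (· ≤ ·) s) : s.InjOn f := by
  intro p hp q hq hpq
  by_contra hne
  rcases hs.total hp hq with h | h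
  · exact (hf (h.lt_of_ne hne)).ne hpq
  · exact (hf (h.lt_of_ne (Ne.symm hne))).ne hpq.symm

end

theorem Fin.strictMono_intCast_val {n : ℕ} : StrictMono fun i : Fin n => (i : ℤ) :=
  Nat.strictMono_cast.comp Fin.val_strictMono

def hookIndex {n₁ n₂ : ℕ} (p : Fin n₁ × Fin n₂) : ℕ := min p.1 (n₂ - 1 - p.2)

def hook (n₁ n₂ t : ℕ) : Finset (Fin n₁ × Fin n₂) := {p | hookIndex p = t}

section Hook
variable {n₁ n₂ t : ℕ}

theorem mem_hook {p : Fin n₁ × Fin n₂} :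
    p ∈ hook n₁ n₂ t ↔ min (p.1 : ℕ) (n₂ - 1 - p.2) = t := by
  rw [hook, mem_filter_univ, hookIndex]

theorem isChain_hook : IsChain (· ≤ ·) (hook n₁ n₂ t : Set (Fin n₁ × Fin n₂)) := by
  intro p hp q hq _
  rw [mem_coe, mem_hook] at hp hq
  simp only [Prod.le_def, Fin.le_def]
  omega

theorem card_eq_sum_card_filter_hook (P : Fin n₁ × Fin n₂ → Prop) [DecidablePred P] :
    #{p | P p} = ∑ t ∈ range (min n₁ n₂), #{p ∈ hook n₁ n₂ t | P p} := by
  rw [card_eq_sum_card_fiberwise (f := hookIndex) (t := range (min n₁ n₂)) fun p _ => ?_]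
  · simp only [hook, filter_filter, and_comm]
  · simp only [hookIndex, coe_range, Set.mem_Iio]
    omega

theorem card_filter_hook_le {γ : Type*} [DecidableEq γ] [AddCommMonoid γ] [PartialOrder γ]
    [IsOrderedCancelAddMonoid γ] {f : Fin n₁ → γ} {g : Fin n₂ → γ} (hf : StrictMono f)
    (hg : StrictMono g) (s : Finset γ) :
    #{p ∈ hook n₁ n₂ t | f p.1 + g p.2 ∈ s} ≤ min #s #(hook n₁ n₂ t) :=
  le_min (card_le_card_of_injOn _ (fun _ hp => (mem_filter.mp hp).2)
      ((hf.add_prodMap hg).injOn_of_isChain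
        (isChain_hook.mono (coe_subset.mpr (filter_subset _ _)))))
    (card_filter_le _ _)

theorem image_hook (ht₁ : t < n₁) (ht₂ : t < n₂) :
    (hook n₁ n₂ t).image (fun p => (p.1 : ℤ) + p.2) = Ico (t : ℤ) (n₁ + n₂ - 1 - t) := by
  ext k
  simp only [mem_image, mem_Ico, mem_hook]
  constructor
  · rintro ⟨p, hp, rfl⟩
    omega
  · rintro ⟨hk₁, hk₂⟩
    by_cases hk : k < n₂
    · exact ⟨(⟨t, ht₁⟩, ⟨(k - t).toNat, by omega⟩), by dsimp only; omega, by dsimp only; omega⟩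
    · exact ⟨(⟨(k - n₂ + 1 + t).toNat, by omega⟩, ⟨n₂ - 1 - t, by omega⟩),
        by dsimp only; omega, by dsimp only; omega⟩

theorem min_le_card_filter_hook_Ico {m : ℕ} {c : ℤ} (ht₁ : t < n₁) (ht₂ : t < n₂)
    (hc₁ : (n₁ + n₂ - 1 - m : ℤ) ≤ 2 * c) (hc₂ : 2 * c ≤ (n₁ + n₂ - m : ℤ)) :
    min m #(hook n₁ n₂ t) ≤ #{p ∈ hook n₁ n₂ t | (p.1 : ℤ) + p.2 ∈ Ico c (c + m)} := by
  have hinj : Set.InjOn (fun p : Fin n₁ × Fin n₂ => (p.1 : ℤ) + p.2) (hook n₁ n₂ t) :=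
    (Fin.strictMono_intCast_val.add_prodMap Fin.strictMono_intCast_val).injOn_of_isChain
      isChain_hook
  rw [← card_image_of_injOn hinj, ← card_image_of_injOn (hinj.mono (coe_subset.mpr
    (filter_subset _ _))), ← filter_image (p := (· ∈ Ico c (c + m))), image_hook ht₁ ht₂,
    filter_mem_eq_inter, Ico_inter_Ico, Int.card_Ico, Int.card_Ico]
  omega

end Hook

theorem card_filter_add_mem_eq_card_fin {α : Type*} [LinearOrder α] [Add α] {n₁ n₂ : ℕ}
    (A B s : Finset α) (hA : #A = n₁) (hB : #B = n₂) :
    #{p ∈ A ×ˢ B | p.1 + p.2 ∈ s} =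
      #{p : Fin n₁ × Fin n₂ | A.orderEmbOfFin hA p.1 + B.orderEmbOfFin hB p.2 ∈ s} := by
  have h : A ×ˢ B = univ.map
      ((A.orderEmbOfFin hA).toEmbedding.prodMap (B.orderEmbOfFin hB).toEmbedding) := by
    rw [← univ_product_univ, prodMap_map_product, map_orderEmbOfFin_univ, map_orderEmbOfFin_univ]
  rw [h, filter_map, card_map]
  rfl

theorem orderEmbOfFin_Ico_zero_apply (n : ℕ) (h : #(Ico (0 : ℤ) n) = n) (i : Fin n) :
    (Ico (0 : ℤ) n).orderEmbOfFin h i = i := by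
  rw [← orderEmbOfFin_unique h (fun i => by simp) Fin.strictMono_intCast_val]

theorem card_filter_add_mem_le_sum_min {α : Type*} [LinearOrder α] [AddCommMonoid α]
    [IsOrderedCancelAddMonoid α] (A B s : Finset α) :
    #{p ∈ A ×ˢ B | p.1 + p.2 ∈ s} ≤ ∑ t ∈ range (min #A #B), min #s #(hook #A #B t) := by
  rw [card_filter_add_mem_eq_card_fin A B s rfl rfl, card_eq_sum_card_filter_hook]
  exact sum_le_sum fun t _ =>
    card_filter_hook_le (A.orderEmbOfFin rfl).strictMono (B.orderEmbOfFin rfl).strictMono s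

theorem sum_min_le_card_filter_add_mem_Ico {n₁ n₂ m : ℕ} {c : ℤ}
    (hc₁ : (n₁ + n₂ - 1 - m : ℤ) ≤ 2 * c) (hc₂ : 2 * c ≤ (n₁ + n₂ - m : ℤ)) :
    ∑ t ∈ range (min n₁ n₂), min m #(hook n₁ n₂ t) ≤
      #{p ∈ Ico (0 : ℤ) n₁ ×ˢ Ico (0 : ℤ) n₂ | p.1 + p.2 ∈ Ico c (c + m)} := by
  rw [card_filter_add_mem_eq_card_fin (n₁ := n₁) (n₂ := n₂) _ _ _ (by simp) (by simp),
    card_eq_sum_card_filter_hook]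
  simp only [orderEmbOfFin_Ico_zero_apply]
  refine sum_le_sum fun t ht => ?_
  rw [mem_range] at ht
  exact min_le_card_filter_hook_Ico (by omega) (by omega) hc₁ hc₂

theorem card_filter_add_mem_le_card_filter_add_mem_Ico (A B s : Finset ℤ) {c : ℤ}
    (hc₁ : (#A + #B - 1 - #s : ℤ) ≤ 2 * c) (hc₂ : 2 * c ≤ (#A + #B - #s : ℤ)) :
    #{p ∈ A ×ˢ B | p.1 + p.2 ∈ s} ≤
      #{p ∈ Ico (0 : ℤ) #A ×ˢ Ico (0 : ℤ) #B | p.1 + p.2 ∈ Ico c (c + #s)} :=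
  (card_filter_add_mem_le_sum_min A B s).trans (sum_min_le_card_filter_add_mem_Ico hc₁ hc₂)

theorem indInterval_eq_ind (n : ℕ) : indInterval n = ind (Ico 0 n) := by
  ext i
  simp [indInterval, ind]

theorem conv_ind_apply (A B : Finset ℤ) (k : ℤ) :
    conv (ind A) (ind B) k = #{p ∈ A ×ˢ B | p.1 + p.2 = k} := by
  rw [conv, tsum_eq_sum (s := A) fun i hi => by simp [ind, hi], card_filter, sum_product]
  push_cast
  refine sum_congr rfl fun a ha => ?_
  simp [ind, ha, ← eq_sub_iff_add_eq']

theorem sum_conv_ind (A B s : Finset ℤ) :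
    ∑ k ∈ s, conv (ind A) (ind B) k = #{p ∈ A ×ˢ B | p.1 + p.2 ∈ s} := by
  rw [card_eq_sum_card_fiberwise (s := {p ∈ A ×ˢ B | p.1 + p.2 ∈ s}) (t := s)
    fun p hp => (mem_filter.mp hp).2]
  push_cast
  refine sum_congr rfl fun k hk => ?_
  rw [conv_ind_apply, filter_filter]
  congr 2
  exact filter_congr fun p _ => ⟨fun h => ⟨h ▸ hk, h⟩, And.right⟩

theorem tsum_conv_ind (A B : Finset ℤ) : ∑' k, conv (ind A) (ind B) k = #A * #B := by
  rw [tsum_eq_sum (s := (A ×ˢ B).image fun p => p.1 + p.2) fun k hk => ?_]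
  · simp_rw [conv_ind_apply]
    norm_cast
    rw [← card_eq_sum_card_image, card_product]
  · rw [conv_ind_apply, Nat.cast_eq_zero, card_eq_zero, filter_eq_empty_iff]
    exact fun p hp h => hk (h ▸ mem_image_of_mem _ hp)

theorem indicator_conv_majorized_general (A₁ A₂ : Finset ℤ) :
    Majorized (conv (ind A₁) (ind A₂)) (conv (indInterval A₁.card) (indInterval A₂.card)) := by
  simp only [indInterval_eq_ind]
  refine ⟨fun s => ?_, ?_⟩
  · set c : ℤ := (#A₁ + #A₂ - #s) / 2
    refine ⟨Ico c (c + #s), by simp, ?_⟩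
    simp only [sum_conv_ind]
    exact_mod_cast card_filter_add_mem_le_card_filter_add_mem_Ico A₁ A₂ s (by omega) (by omega)
  · simp [tsum_conv_ind]

theorem indicator_conv_majorized (A₁ A₂ : Finset ℤ) (h₁ : A₁.Nonempty) (h₂ : A₂.Nonempty) :
    Majorized (conv (ind A₁) (ind A₂)) (conv (indInterval A₁.card) (indInterval A₂.card)) :=
  indicator_conv_majorized_general A₁ A₂
end
end

section
/- For all real k ∈ [0,1] and α > 1, (1 + k^{1+α})^{(1−α)/(1+α)} ≥ 1 − (1 − 2^{(1−α)/(1+α)})·k. -/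
theorem rpow_lower_bound (k α : ℝ) (hk0 : 0 ≤ k) (hk1 : k ≤ 1) (hα : 1 < α) :
    (1 + k ^ (1 + α)) ^ ((1 - α) / (1 + α))
      ≥ 1 - (1 - (2 : ℝ) ^ ((1 - α) / (1 + α))) * k := by
  set p : ℝ := (1 - α) / (1 + α) with hp
  have hαpos : (0:ℝ) < 1 + α := by linarith
  have hpneg : p < 0 := div_neg_of_neg_of_pos (by linarith) hαpos
  have hpgt : -1 < p := by
    rw [hp, lt_div_iff₀ hαpos]
    linarith
  rcases eq_or_lt_of_le hk0 with hk0' | hk0'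
  · rw [← hk0']
    rw [Real.zero_rpow (by positivity)]
    norm_num
  -- k > 0 case
  have hkpow : k ^ (1 + α) ≤ k ^ (2:ℝ) :=
    Real.rpow_le_rpow_of_exponent_ge hk0' hk1 (by linarith)
  have hk2 : k ^ (2:ℝ) = k * k := by
    rw [show (2:ℝ) = (2:ℕ) by norm_num, Real.rpow_natCast]; ring
  have hknn : 0 ≤ k ^ (1 + α) := Real.rpow_nonneg hk0 _
  have hbase : (0:ℝ) < 1 + k ^ (1 + α) := by linarith
  have hhalf : (0:ℝ) < 1 - k / 2 := by linarith
  have h1 : 1 + k ^ (1 + α) ≤ (1 - k / 2)⁻¹ := by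
    rw [← one_div, le_div_iff₀ hhalf]
    have ht : k ^ (1 + α) * (2 - k) ≤ (k * k) * (2 - k) :=
      mul_le_mul_of_nonneg_right (hk2 ▸ hkpow) (by linarith)
    nlinarith [mul_nonneg hk0 (sq_nonneg (1 - k))]
  -- apply negative power
  have h2 : ((1 - k / 2)⁻¹) ^ p ≤ (1 + k ^ (1 + α)) ^ p :=
    Real.rpow_le_rpow_of_nonpos hbase h1 hpneg.le
  have h3 : ((1 - k / 2)⁻¹) ^ p = (1 - k / 2) ^ (-p) := by
    rw [Real.inv_rpow hhalf.le, ← Real.rpow_neg hhalf.le]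
  -- concavity of x ^ (-p)
  have hr0 : 0 ≤ -p := by linarith
  have hr1 : -p ≤ 1 := by linarith
  have hcc := (Real.concaveOn_rpow hr0 hr1).2
    (show (1:ℝ) ∈ Set.Ici (0:ℝ) by norm_num) (show (1/2:ℝ) ∈ Set.Ici (0:ℝ) by norm_num)
    (show (0:ℝ) ≤ 1 - k by linarith) hk0 (by ring)
  simp only [smul_eq_mul] at hcc
  have hmix : (1 - k) * (1:ℝ) + k * (1/2) = 1 - k / 2 := by ring
  rw [hmix, Real.one_rpow] at hcc
  have h4 : ((1/2:ℝ)) ^ (-p) = (2:ℝ) ^ p := by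
    rw [show (1/2:ℝ) = 2⁻¹ by norm_num, ← Real.rpow_neg_one 2,
      ← Real.rpow_mul (by norm_num)]
    norm_num
  rw [h4] at hcc
  have := le_trans hcc (h3 ▸ h2)
  linarith
end

section
/- Erdős' extension of Sperner's theorem (k-Sperner): in the Boolean lattice of subsets of an n-element set, any family that is a union of at most k antichains has cardinality at most the sum of the k largest binomial coefficients C(n,i). -/
/-!
Split `F` into its layers `F # r` and put `x r = #(F # r) / C(n, r) ∈ [0, 1]`. Applying the LYM
inequality to each antichain gives `∑ r, x r ≤ k`, while `#F = ∑ r, x r * C(n, r)`. So it suffices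
to solve a fractional knapsack problem: with the `k` largest weights `C(n, r)` all at least a
threshold `c` and the others at most `c`, we have `x * w ≤ max (w - c) 0 + c * x` termwise, and
summing gives the claimed bound.
-/

open Finset

theorem Finset.exists_subset_card_eq_forall_sdiff_le {ι α : Type*} [DecidableEq ι]
    [LinearOrder α] (f : ι → α) {s : Finset ι} {k : ℕ} (hk : k ≤ #s) :
    ∃ t ⊆ s, #t = k ∧ ∀ a ∈ t, ∀ b ∈ s \ t, f b ≤ f a := by
  induction k with
  | zero => exact ⟨∅, empty_subset s, card_empty, by simp⟩
  | succ k ih =>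
    obtain ⟨t, hts, htk, htop⟩ := ih (by omega)
    have hne : (s \ t).Nonempty := by
      rw [← card_pos, card_sdiff_of_subset hts]
      omega
    obtain ⟨m, hm, hmax⟩ := exists_max_image (s \ t) f hne
    refine ⟨insert m t, insert_subset (sdiff_subset hm) hts, ?_, ?_⟩
    · rw [card_insert_of_notMem (mem_sdiff.1 hm).2, htk]
    · intro a ha b hb
      rw [sdiff_insert] at hb
      rcases mem_insert.1 ha with rfl | ha
      · exact hmax b (mem_of_mem_erase hb)
      · exact htop a ha b (mem_of_mem_erase hb)

section Knapsack

variable {ι 𝕜 : Type*} [Field 𝕜] [LinearOrder 𝕜] [IsStrictOrderedRing 𝕜]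
  {s : Finset ι} {x w : ι → 𝕜} {k : ℕ}

theorem sum_mul_le_sum_max_sub_add (hx0 : ∀ i ∈ s, 0 ≤ x i) (hx1 : ∀ i ∈ s, x i ≤ 1)
    (hk : ∑ i ∈ s, x i ≤ k) {c : 𝕜} (hc : 0 ≤ c) :
    ∑ i ∈ s, x i * w i ≤ ∑ i ∈ s, max (w i - c) 0 + c * k := by
  have hterm : ∀ i ∈ s, x i * w i ≤ max (w i - c) 0 + c * x i := fun i hi => by
    have := hx0 i hi
    have := hx1 i hi
    rcases le_total (w i) c with h | h
    · nlinarith [le_max_right (w i - c) 0]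
    · nlinarith [le_max_left (w i - c) 0]
  calc ∑ i ∈ s, x i * w i ≤ ∑ i ∈ s, (max (w i - c) 0 + c * x i) := sum_le_sum hterm
    _ ≤ ∑ i ∈ s, max (w i - c) 0 + c * k := by
      rw [sum_add_distrib, ← mul_sum]
      gcongr

theorem exists_subset_card_le_sum_mul_le [DecidableEq ι] (hw : ∀ i ∈ s, 0 ≤ w i)
    (hx0 : ∀ i ∈ s, 0 ≤ x i) (hx1 : ∀ i ∈ s, x i ≤ 1) (hk : ∑ i ∈ s, x i ≤ k) :
    ∃ t ⊆ s, #t ≤ k ∧ ∑ i ∈ s, x i * w i ≤ ∑ i ∈ t, w i := by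
  by_cases hs : #s ≤ k
  · exact ⟨s, subset_rfl, hs, sum_le_sum fun i hi => mul_le_of_le_one_left (hw i hi) (hx1 i hi)⟩
  obtain ⟨t, hts, htk, htop⟩ := exists_subset_card_eq_forall_sdiff_le w (le_of_not_ge hs)
  have hne : (s \ t).Nonempty := by
    rw [← card_pos, card_sdiff_of_subset hts]
    omega
  set c := (s \ t).sup' hne w
  have hc : 0 ≤ c := by
    obtain ⟨b, hb⟩ := hne
    exact (hw b (mem_sdiff.1 hb).1).trans (le_sup' w hb)
  have hsum : ∑ i ∈ s, max (w i - c) 0 = ∑ i ∈ t, (w i - c) := by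
    rw [← sum_sdiff hts, sum_eq_zero fun b hb => max_eq_right (sub_nonpos.2 (le_sup' w hb)),
      zero_add]
    exact sum_congr rfl fun a ha =>
      max_eq_left (sub_nonneg.2 (sup'_le hne w fun b hb => htop a ha b hb))
  refine ⟨t, hts, htk.le, ?_⟩
  calc ∑ i ∈ s, x i * w i ≤ ∑ i ∈ s, max (w i - c) 0 + c * k :=
        sum_mul_le_sum_max_sub_add hx0 hx1 hk hc
    _ = ∑ i ∈ t, w i := by
      rw [hsum, sum_sub_distrib, sum_const, htk, nsmul_eq_mul]
      ring

end Knapsack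

section Layers

variable {α ι 𝕜 : Type*} [Fintype α]
  [Semifield 𝕜] [LinearOrder 𝕜] [IsStrictOrderedRing 𝕜]

theorem sum_card_slice_div_choose_le_card [DecidableEq α] [Fintype ι] {𝒜 : ι → Finset (Finset α)}
    {F : Finset (Finset α)} (h𝒜 : ∀ j, IsAntichain (· ⊆ ·) (𝒜 j : Set (Finset α)))
    (hF : F ⊆ univ.biUnion 𝒜) :
    ∑ r ∈ range (Fintype.card α + 1), (#(F # r) / (Fintype.card α).choose r : 𝕜) ≤
      Fintype.card ι := by
  have hslice (r : ℕ) : #(F # r) ≤ ∑ j, #((𝒜 j) # r) := by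
    refine (card_le_card ?_).trans card_biUnion_le
    simp only [slice, ← filter_biUnion]
    exact filter_subset_filter _ hF
  calc ∑ r ∈ range (Fintype.card α + 1), (#(F # r) / (Fintype.card α).choose r : 𝕜)
      ≤ ∑ r ∈ range (Fintype.card α + 1), ∑ j, (#((𝒜 j) # r) / (Fintype.card α).choose r : 𝕜) :=
        sum_le_sum fun r _ => by
          rw [← sum_div]
          gcongr
          exact_mod_cast hslice r
    _ = ∑ j, ∑ r ∈ range (Fintype.card α + 1),
          (#((𝒜 j) # r) / (Fintype.card α).choose r : 𝕜) := sum_comm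
    _ ≤ ∑ _j : ι, 1 := sum_le_sum fun j _ => sum_card_slice_div_choose_le_one (h𝒜 j)
    _ = Fintype.card ι := by simp

theorem card_slice_div_choose_le_one (F : Finset (Finset α)) (r : ℕ) :
    (#(F # r) / (Fintype.card α).choose r : 𝕜) ≤ 1 :=
  div_le_one_of_le₀ (by exact_mod_cast (sized_slice (𝒜 := F)).card_le) (Nat.cast_nonneg _)

theorem sum_card_slice_div_choose_mul_choose (F : Finset (Finset α)) :
    ∑ r ∈ range (Fintype.card α + 1),
      (#(F # r) / (Fintype.card α).choose r : 𝕜) * (Fintype.card α).choose r = #F := by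
  rw [← sum_card_slice F, Nat.range_succ_eq_Iic, Nat.cast_sum]
  refine sum_congr rfl fun r hr => div_mul_cancel₀ _ ?_
  exact Nat.cast_ne_zero.2 (Nat.choose_pos (mem_Iic.1 hr)).ne'

end Layers

/-- Erdős' k-Sperner theorem: a union of at most `k` antichains in the Boolean lattice of
subsets of an `n`-element set has size at most the sum of the `k` largest binomial
coefficients `C(n, i)`. -/
theorem k_sperner (n k : ℕ) (F : Finset (Finset (Fin n)))
    (h : ∃ 𝒜 : Fin k → Finset (Finset (Fin n)),
      (∀ j, IsAntichain (· ⊆ ·) ((𝒜 j : Set (Finset (Fin n))))) ∧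
      F ⊆ Finset.univ.biUnion 𝒜) :
    F.card ≤ ((Finset.range (n + 1)).powerset.filter fun t => t.card ≤ k).sup
      (fun t => ∑ i ∈ t, n.choose i) := by
  obtain ⟨𝒜, h𝒜, hF⟩ := h
  have hLYM : ∑ r ∈ range (n + 1), (#(F # r) / n.choose r : ℚ) ≤ k := by
    simpa using sum_card_slice_div_choose_le_card (𝕜 := ℚ) h𝒜 hF
  obtain ⟨t, hts, htk, hknapsack⟩ :=
    exists_subset_card_le_sum_mul_le (w := fun r => (n.choose r : ℚ))
      (fun _ _ => by positivity) (fun _ _ => by positivity)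
      (fun r _ => by simpa using card_slice_div_choose_le_one (𝕜 := ℚ) F r) hLYM
  have hcard := sum_card_slice_div_choose_mul_choose (𝕜 := ℚ) F
  simp only [Fintype.card_fin] at hcard
  have hFt : #F ≤ ∑ i ∈ t, n.choose i := by exact_mod_cast hcard ▸ hknapsack
  exact hFt.trans <|
    le_sup (f := fun t => ∑ i ∈ t, n.choose i) (mem_filter.2 ⟨mem_powerset.2 hts, htk⟩)
end

section
/- Littlewood–Offord via Sperner: if a₁,...,a_n are positive reals and X₁,...,X_n are i.i.d. Bernoulli(1/2), then for every real t, P(a₁X₁ + ... + a_nX_n = t) ≤ C(n,⌊n/2⌋)/2^n. -/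
open Finset

/-- Littlewood–Offord via Sperner: for positive weights `a₁, …, a_n` and i.i.d.
Bernoulli(1/2) variables `X₁, …, X_n` (modeled by counting points of the cube `{0,1}^n`),
`P(∑ aᵢ Xᵢ = t) ≤ C(n, ⌊n/2⌋) / 2^n`. -/
theorem littlewood_offord_bernoulli (n : ℕ) (a : Fin n → ℝ) (hpos : ∀ i, 0 < a i) (t : ℝ) :
    ((univ.filter fun x : Fin n → Bool =>
        ∑ i, a i * (if x i then 1 else 0) = t).card : ℝ) / 2 ^ n
      ≤ (n.choose (n / 2) : ℝ) / 2 ^ n := by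
  have h2 : (0:ℝ) < 2 ^ n := by positivity
  rw [div_le_div_iff_of_pos_right h2]
  have key : (univ.filter fun x : Fin n → Bool =>
        ∑ i, a i * (if x i then 1 else 0) = t).card
      ≤ n.choose (n / 2) := by
    set 𝒜 : Finset (Finset (Fin n)) :=
      univ.filter (fun S : Finset (Fin n) => ∑ i ∈ S, a i = t) with h𝒜
    have hcard : (univ.filter fun x : Fin n → Bool =>
        ∑ i, a i * (if x i then 1 else 0) = t).card = 𝒜.card := by
      apply Finset.card_bij (fun x _ => univ.filter (fun i => x i))
      · intro x hx
        simp only [h𝒜, mem_filter, mem_univ, true_and] at hx ⊢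
        rw [Finset.sum_filter]
        rw [← hx]
        apply Finset.sum_congr rfl
        intro i _
        by_cases h : x i <;> simp [h]
      · intro x hx y hy hxy
        funext i
        have := Finset.ext_iff.mp hxy i
        simp only [mem_filter, mem_univ, true_and] at this
        by_cases h : x i
        · simp [h, this.mp h]
        · by_cases h' : y i
          · exact absurd (this.mpr h') h
          · simp [h, h']
      · intro S hS
        refine ⟨fun i => i ∈ S, ?_, ?_⟩
        · simp only [h𝒜, mem_filter, mem_univ, true_and] at hS ⊢
          rw [← hS]
          simp only [mul_ite, mul_one, mul_zero, decide_eq_true_eq]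
          rw [Finset.sum_ite_mem, Finset.univ_inter]
        · ext i; simp
    rw [hcard]
    have hanti : IsAntichain (· ⊆ ·) (𝒜 : Set (Finset (Fin n))) := by
      intro S hS T hT hne hsub
      simp only [h𝒜, coe_filter, Set.mem_setOf_eq, mem_univ, true_and] at hS hT
      have hssub : S ⊂ T := hsub.ssubset_of_ne hne
      have hne' : (T \ S).Nonempty := Finset.sdiff_nonempty.mpr (fun h => hssub.2 h)
      have : ∑ i ∈ T, a i = ∑ i ∈ S, a i + ∑ i ∈ T \ S, a i := by
        rw [add_comm, Finset.sum_sdiff hsub]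
      have hpos' : 0 < ∑ i ∈ T \ S, a i :=
        Finset.sum_pos (fun i _ => hpos i) hne'
      rw [hS, hT] at this
      linarith
    have := IsAntichain.sperner hanti
    simpa using this
  exact_mod_cast key
end

section
/- Let 0 < a₁ ≠ a₂ ≠ ... ≠ a_N be distinct positive reals and Y₁,...,Y_N i.i.d. Bernoulli(1/2). Then for every integer k, P(a₁Y₁ + ... + a_NY_N = k) ≤ P(Y₁ + 2Y₂ + ... + NY_N = ⌊N(N+1)/4⌋). -/
/-!
Read a subset of `{1, …, n}` as a point of Stanley's poset `M(n)`: a cover replaces an element `j`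
by `j + 1` (or adds `1`), and the rank is the sum of the elements. For increasing positive weights
a cover strictly increases the weighted sum, so each level set of the weighted sum is an antichain.
Proctor's raising and lowering operators `U`, `D` on the free vector space of `M(n)` satisfy
`D U - U D = T - 2m` on rank `m`, where `T = n(n+1)/2`, and these `sl₂`-relations make `U` injective
below the middle rank. Hall's theorem turns this into injective cover-matchings towards the middle
(from above by complementation), which push every element to the middle rank along a chain, so no
antichain is larger than the middle rank: the level set of `1, 2, …, N` at `⌊N(N+1)/4⌋`.
-/

open Finset

noncomputable section

/-- Probability mass function of `∑ aᵢ Yᵢ` where `Y₁, …, Y_N` are i.i.d. Bernoulli(1/2). -/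
def wpmf (N : ℕ) (a : Fin N → ℝ) : ℝ → ℝ := fun t =>
  ((univ.filter fun x : Fin N → Bool =>
      ∑ i, a i * (if x i then 1 else 0) = t).card : ℝ) / 2 ^ N

open Relation

section RaisingLowering

variable {K V : Type*} [Field K] [CharZero K] [AddCommGroup V] [Module K V]
  {U D : Module.End K V} {W : ℕ → Submodule K V} {T : ℕ}

theorem down_pow_succ_apply (hU : ∀ m, ∀ v ∈ W m, U v ∈ W (m + 1))
    (hDU : ∀ m, ∀ v ∈ W m, D (U v) = U (D v) + ((T : K) - 2 * m) • v) (k : ℕ) :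
    ∀ m, ∀ v ∈ W m, D ((U ^ (k + 1)) v) =
      (U ^ (k + 1)) (D v) + (((k : K) + 1) * ((T : K) - 2 * m - k)) • (U ^ k) v := by
  have hpow : ∀ i (w : V), (U ^ i) (U w) = (U ^ (i + 1)) w := fun i w => by
    rw [pow_succ, Module.End.mul_apply]
  induction k with
  | zero =>
    intro m v hv
    simpa using hDU m v hv
  | succ k ih =>
    intro m v hv
    rw [← hpow, ih (m + 1) _ (hU m v hv), hDU m v hv, map_add, map_smul, hpow, hpow]
    push_cast
    module

theorem eq_zero_of_up_pow_apply_eq_zero (hU : ∀ m, ∀ v ∈ W m, U v ∈ W (m + 1))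
    (hD : ∀ m, ∀ v ∈ W (m + 1), D v ∈ W m) (hD0 : ∀ v ∈ W 0, D v = 0)
    (hDU : ∀ m, ∀ v ∈ W m, D (U v) = U (D v) + ((T : K) - 2 * m) • v) :
    ∀ m k, ∀ v ∈ W m, 2 * m + k ≤ T → (U ^ k) v = 0 → v = 0 := by
  intro m
  induction m using Nat.strong_induction_on with
  | _ m ihm =>
  intro k
  induction k with
  | zero => simp
  | succ k ihk =>
    intro v hv hk hUv
    set c : K := ((k : K) + 1) * ((T : K) - 2 * m - k)
    have hc : c ≠ 0 := by
      have : c = (((k + 1) * (T - 2 * m - k) : ℕ) : K) := by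
        simp only [c]
        push_cast [Nat.cast_sub (by omega : 2 * m ≤ T), Nat.cast_sub (by omega : k ≤ T - 2 * m)]
        ring
      rw [this, Nat.cast_ne_zero]
      exact Nat.mul_ne_zero (by omega) (by omega)
    have hcomm : (U ^ (k + 1)) (D v) = -(c • (U ^ k) v) := by
      rw [eq_neg_iff_add_eq_zero, ← down_pow_succ_apply hU hDU k m v hv, hUv, map_zero]
    have hDv : D v = 0 := by
      rcases m with _ | m
      · exact hD0 v hv
      · refine ihm m (by omega) (k + 2) (D v) (hD m v hv) (by omega) ?_
        rw [pow_succ', Module.End.mul_apply, hcomm, map_neg, map_smul, ← Module.End.mul_apply,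
          ← pow_succ', hUv, smul_zero, neg_zero]
    rw [hDv, map_zero, eq_comm, neg_eq_zero, smul_eq_zero] at hcomm
    exact ihk v hv (by omega) (hcomm.resolve_left hc)

end RaisingLowering

namespace Finsupp

theorem apply_mem_of_forall_single_mem {α R M : Type*} [Semiring R] [AddCommMonoid M]
    [Module R M] {f : (α →₀ R) →ₗ[R] M} {s : Set α} {p : Submodule R M}
    (h : ∀ a ∈ s, f (single a 1) ∈ p) {v : α →₀ R} (hv : v ∈ supported R R s) : f v ∈ p := by
  rw [supported_eq_span_single] at hv
  refine (Submodule.span_le (p := p.comap f)).2 ?_ hv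
  rintro _ ⟨a, ha, rfl⟩
  exact h a ha

theorem exists_injective_apply_ne_zero_of_linearIndependent {ι κ K : Type*} [Field K]
    [DecidableEq κ] {v : ι → κ →₀ K} (hv : LinearIndependent K v) :
    ∃ g : ι → κ, Function.Injective g ∧ ∀ i, v i (g i) ≠ 0 := by
  suffices hall : ∀ s : Finset ι, #s ≤ #(s.biUnion fun i => (v i).support) by
    obtain ⟨g, hg, hgv⟩ :=
      (all_card_le_biUnion_card_iff_exists_injective fun i => (v i).support).1 hall
    exact ⟨g, hg, fun i => mem_support_iff.1 (hgv i)⟩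
  intro s
  set t := s.biUnion fun i => (v i).support
  have : Module.Finite K (supported K K (t : Set κ)) :=
    Module.Finite.equiv (supportedEquivFinsupp _).symm
  have hspan : Submodule.span K (Set.range (v ∘ Subtype.val : s → κ →₀ K)) ≤
      supported K K (t : Set κ) := by
    rw [Submodule.span_le]
    rintro _ ⟨i, rfl⟩
    exact supported_mono (coe_subset.2 (subset_biUnion_of_mem (fun i => (v i).support) i.2))
      (mem_supported_support K (v i))
  calc #s = Module.finrank K (Submodule.span K (Set.range (v ∘ Subtype.val : s → κ →₀ K))) := by
        rw [finrank_span_eq_card (hv.comp _ Subtype.val_injective), Fintype.card_coe]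
    _ ≤ Module.finrank K (supported K K (t : Set κ)) := Submodule.finrank_mono hspan
    _ = #t := by
        rw [(supportedEquivFinsupp _).finrank_eq, Module.finrank_finsupp_self]
        simp

end Finsupp

structure TowardMiddle {α : Type*} (r : α → α → Prop) (s : Finset α) (ρ : α → ℕ) (md : ℕ)
    (f : α → α) : Prop where
  mapsTo : Set.MapsTo f s s
  up : ∀ x ∈ s, ρ x < md → ρ (f x) = ρ x + 1 ∧ r x (f x)
  down : ∀ x ∈ s, md < ρ x → ρ (f x) + 1 = ρ x ∧ r (f x) x
  mid : ∀ x ∈ s, ρ x = md → f x = x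
  injOn : ∀ x ∈ s, ∀ y ∈ s, ρ x = ρ y → f x = f y → x = y

namespace TowardMiddle

variable {α : Type*} {r : α → α → Prop} {s : Finset α} {ρ : α → ℕ} {md : ℕ} {f : α → α}

theorem iterate_of_le (hf : TowardMiddle r s ρ md f) {x : α} (hx : x ∈ s) (hxm : ρ x ≤ md)
    (t : ℕ) : ρ (f^[t] x) = min (ρ x + t) md ∧ ReflTransGen r x (f^[t] x) := by
  induction t with
  | zero => exact ⟨by simpa using hxm, .refl⟩
  | succ t ih =>
    rw [Function.iterate_succ_apply']
    have hy := hf.mapsTo.iterate t hx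
    rcases (ih.1 ▸ min_le_right _ _ : ρ (f^[t] x) ≤ md).lt_or_eq with hlt | heq
    · obtain ⟨hrank, hr⟩ := hf.up _ hy hlt
      exact ⟨by omega, ih.2.tail hr⟩
    · rw [hf.mid _ hy heq]
      exact ⟨by omega, ih.2⟩

theorem iterate_of_ge (hf : TowardMiddle r s ρ md f) {x : α} (hx : x ∈ s) (hxm : md ≤ ρ x)
    (t : ℕ) : ρ (f^[t] x) = max (ρ x - t) md ∧ ReflTransGen r (f^[t] x) x := by
  induction t with
  | zero => exact ⟨by simpa using hxm, .refl⟩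
  | succ t ih =>
    rw [Function.iterate_succ_apply']
    have hy := hf.mapsTo.iterate t hx
    rcases (ih.1 ▸ le_max_right _ _ : md ≤ ρ (f^[t] x)).lt_or_eq with hlt | heq
    · obtain ⟨hrank, hr⟩ := hf.down _ hy hlt
      exact ⟨by omega, ih.2.head hr⟩
    · rw [hf.mid _ hy heq.symm]
      exact ⟨by omega, ih.2⟩

theorem rank_apply_eq (hf : TowardMiddle r s ρ md f) {x y : α} (hx : x ∈ s) (hy : y ∈ s)
    (h : ρ x = ρ y) : ρ (f x) = ρ (f y) := by
  rcases lt_trichotomy (ρ x) md with hlt | heq | hgt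
  · rw [(hf.up x hx hlt).1, (hf.up y hy (h ▸ hlt)).1, h]
  · rw [hf.mid x hx heq, hf.mid y hy (h ▸ heq), h]
  · have := (hf.down x hx hgt).1
    have := (hf.down y hy (h ▸ hgt)).1
    omega

theorem iterate_injOn (hf : TowardMiddle r s ρ md f) (t : ℕ) {x y : α} (hx : x ∈ s)
    (hy : y ∈ s) (h : ρ x = ρ y) (hxy : f^[t] x = f^[t] y) : x = y := by
  induction t generalizing x y with
  | zero => exact hxy
  | succ t ih =>
    rw [Function.iterate_succ_apply, Function.iterate_succ_apply] at hxy
    exact hf.injOn x hx y hy h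
      (ih (hf.mapsTo hx) (hf.mapsTo hy) (hf.rank_apply_eq hx hy h) hxy)

theorem rank_iterate (hf : TowardMiddle r s ρ md f) {N : ℕ} (hN : ∀ x ∈ s, ρ x ≤ N)
    (hmd : md ≤ N) {x : α} (hx : x ∈ s) : ρ (f^[N] x) = md := by
  have := hN x hx
  rcases le_total (ρ x) md with h | h
  · have := (hf.iterate_of_le hx h N).1
    omega
  · have := (hf.iterate_of_ge hx h N).1
    omega

theorem iterate_iterate (hf : TowardMiddle r s ρ md f) {N : ℕ} (hN : ∀ x ∈ s, ρ x ≤ N)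
    (hmd : md ≤ N) {x : α} (hx : x ∈ s) (d : ℕ) : f^[N] (f^[d] x) = f^[N] x := by
  rw [← Function.iterate_add_apply, add_comm, Function.iterate_add_apply]
  exact Function.iterate_fixed (hf.mid _ (hf.mapsTo.iterate N hx) (hf.rank_iterate hN hmd hx)) d

theorem reflTransGen_or_of_iterate_eq (hf : TowardMiddle r s ρ md f) {N : ℕ}
    (hN : ∀ x ∈ s, ρ x ≤ N) (hmd : md ≤ N) {x y : α} (hx : x ∈ s) (hy : y ∈ s)
    (hxy : f^[N] x = f^[N] y) : ReflTransGen r x y ∨ ReflTransGen r y x := by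
  wlog hle : ρ x ≤ ρ y generalizing x y
  · exact (this hy hx hxy.symm (le_of_not_ge hle)).symm
  left
  by_cases hym : ρ y ≤ md
  · obtain ⟨hrank, hr⟩ := hf.iterate_of_le hx (hle.trans hym) (ρ y - ρ x)
    convert hr
    refine (hf.iterate_injOn N (hf.mapsTo.iterate _ hx) hy (by omega) ?_).symm
    rw [hf.iterate_iterate hN hmd hx, hxy]
  by_cases hxm : md ≤ ρ x
  · obtain ⟨hrank, hr⟩ := hf.iterate_of_ge hy (hxm.trans hle) (ρ y - ρ x)
    convert hr
    refine hf.iterate_injOn N hx (hf.mapsTo.iterate _ hy) (by omega) ?_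
    rw [hf.iterate_iterate hN hmd hy, hxy]
  · exact (hf.iterate_of_le hx (by omega) N).2.trans
      (hxy ▸ (hf.iterate_of_ge hy (by omega) N).2)

theorem card_le_of_isAntichain (hf : TowardMiddle r s ρ md f) {A : Finset α} (hAs : A ⊆ s)
    (hA : IsAntichain (ReflTransGen r) (A : Set α)) : #A ≤ #{x ∈ s | ρ x = md} := by
  have hN : ∀ x ∈ s, ρ x ≤ md + s.sup ρ := fun x hx => (le_sup hx).trans (by omega)
  refine card_le_card_of_injOn (f^[md + s.sup ρ]) (fun x hx => ?_) (fun x hx y hy hxy => ?_)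
  · exact mem_filter.2 ⟨hf.mapsTo.iterate _ (hAs hx), hf.rank_iterate hN (by omega) (hAs hx)⟩
  · by_contra hne
    rcases hf.reflTransGen_or_of_iterate_eq hN (by omega) (hAs hx) (hAs hy) hxy with h | h
    · exact hA hx hy hne h
    · exact hA hy hx (Ne.symm hne) h

end TowardMiddle

theorem exists_towardMiddle {α : Type*} {r : α → α → Prop} {s : Finset α} {ρ : α → ℕ} {md : ℕ}
    (hup : ∀ m < md, ∃ g : α → α, Set.InjOn g {x | x ∈ s ∧ ρ x = m} ∧
      ∀ x ∈ s, ρ x = m → g x ∈ s ∧ ρ (g x) = m + 1 ∧ r x (g x))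
    (hdown : ∀ m, md < m → ∃ g : α → α, Set.InjOn g {x | x ∈ s ∧ ρ x = m} ∧
      ∀ x ∈ s, ρ x = m → g x ∈ s ∧ ρ (g x) + 1 = m ∧ r (g x) x) :
    ∃ f, TowardMiddle r s ρ md f := by
  classical
  have : Nonempty (α → α) := ⟨id⟩
  choose! gu hgu using hup
  choose! gd hgd using hdown
  refine ⟨fun x => if ρ x < md then gu (ρ x) x else if md < ρ x then gd (ρ x) x else x,
    ⟨fun x hx => ?_, fun x hx h => ?_, fun x hx h => ?_, fun x hx h => ?_,
      fun x hx y hy h hxy => ?_⟩⟩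
  · split_ifs with h₁ h₂
    exacts [((hgu _ h₁).2 x hx rfl).1, ((hgd _ h₂).2 x hx rfl).1, hx]
  · simpa [h] using ((hgu _ h).2 x hx rfl).2
  · simpa [h, h.not_gt] using ((hgd _ h).2 x hx rfl).2
  · simp [h]
  · rw [← h] at hxy
    split_ifs at hxy with h₁ h₂
    · exact (hgu _ h₁).1 ⟨hx, rfl⟩ ⟨hy, h.symm⟩ hxy
    · exact (hgd _ h₂).1 ⟨hx, rfl⟩ ⟨hy, h.symm⟩ hxy
    · exact hxy

namespace ErdosMoser

def subsets (n : ℕ) : Finset (Finset ℕ) := (Icc 1 n).powerset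

def rank (S : Finset ℕ) : ℕ := ∑ i ∈ S, i

def topRank (n : ℕ) : ℕ := rank (Icc 1 n)

def level (n m : ℕ) : Set (Finset ℕ) := {S | S ∈ subsets n ∧ rank S = m}

-- Moves at `j = 0` treat `0` as an element that is always present: `raise 0` adds `1` and
-- `lower 0` removes it.
def CanRaise (j : ℕ) (S : Finset ℕ) : Prop := (j = 0 ∨ j ∈ S) ∧ j + 1 ∉ S

def raise (j : ℕ) (S : Finset ℕ) : Finset ℕ := insert (j + 1) (S.erase j)

def CanLower (j : ℕ) (S : Finset ℕ) : Prop := j + 1 ∈ S ∧ j ∉ S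

def lower (j : ℕ) (S : Finset ℕ) : Finset ℕ := (insert j (S.erase (j + 1))).erase 0

instance (j : ℕ) (S : Finset ℕ) : Decidable (CanRaise j S) :=
  inferInstanceAs (Decidable (_ ∧ _))

instance (j : ℕ) (S : Finset ℕ) : Decidable (CanLower j S) :=
  inferInstanceAs (Decidable (_ ∧ _))

def Raises (n : ℕ) (S S' : Finset ℕ) : Prop := ∃ j < n, CanRaise j S ∧ raise j S = S'

def complIcc (n : ℕ) (S : Finset ℕ) : Finset ℕ := Icc 1 n \ S

theorem mem_subsets {n : ℕ} {S : Finset ℕ} : S ∈ subsets n ↔ S ⊆ Icc 1 n := mem_powerset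

theorem zero_notMem_of_mem_subsets {n : ℕ} {S : Finset ℕ} (hS : S ∈ subsets n) : 0 ∉ S :=
  fun h => by simpa using mem_subsets.1 hS h

theorem topRank_mul_two (n : ℕ) : topRank n * 2 = n * (n + 1) := by
  induction n with
  | zero => rfl
  | succ n ih =>
    rw [topRank, rank, sum_Icc_succ_top (by omega)] at *
    rw [add_mul, ih]
    ring

theorem topRank_div_two (n : ℕ) : topRank n / 2 = n * (n + 1) / 4 := by
  have := topRank_mul_two n
  generalize n * (n + 1) = p at this
  omega

theorem rank_le_topRank {n : ℕ} {S : Finset ℕ} (hS : S ∈ subsets n) : rank S ≤ topRank n :=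
  sum_le_sum_of_subset (mem_subsets.1 hS)

theorem rank_raise {j : ℕ} {S : Finset ℕ} (h : CanRaise j S) : rank (raise j S) = rank S + 1 := by
  have hj1 : j + 1 ∉ S.erase j := fun h' => h.2 (mem_of_mem_erase h')
  rw [rank, raise, sum_insert hj1]
  rcases h.1 with rfl | hj
  · rw [sum_erase S (f := fun i => i) rfl, rank, add_comm, zero_add]
  · rw [rank, ← sum_erase_add _ _ hj]
    ring

theorem raise_mem_subsets {n j : ℕ} {S : Finset ℕ} (hj : j < n) (hS : S ∈ subsets n) :
    raise j S ∈ subsets n := by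
  rw [mem_subsets] at *
  exact insert_subset (by simp; omega) ((erase_subset _ _).trans hS)

theorem lower_mem_subsets {n j : ℕ} {S : Finset ℕ} (h : CanLower j S) (hS : S ∈ subsets n) :
    lower j S ∈ subsets n := by
  rw [mem_subsets] at *
  have := mem_Icc.1 (hS h.1)
  intro i hi
  simp only [lower, mem_erase, mem_insert] at hi
  rcases hi with ⟨hi0, rfl | ⟨-, hi⟩⟩
  · exact mem_Icc.2 (by omega)
  · exact hS hi

theorem canLower_raise {j : ℕ} {S : Finset ℕ} (h : CanRaise j S) (h0 : 0 ∉ S) :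
    CanLower j (raise j S) ∧ lower j (raise j S) = S := by
  obtain ⟨hj, hj1⟩ := h
  refine ⟨by simp [CanLower, raise], ?_⟩
  ext i
  simp only [lower, raise, mem_erase, mem_insert]
  by_cases hi : i ∈ S <;> simp [hi] <;> grind

theorem canRaise_lower {j : ℕ} {S : Finset ℕ} (h : CanLower j S) (h0 : 0 ∉ S) :
    CanRaise j (lower j S) ∧ raise j (lower j S) = S := by
  obtain ⟨hj1, hj⟩ := h
  refine ⟨by simp [CanRaise, lower]; omega, ?_⟩
  ext i
  simp only [lower, raise, mem_erase, mem_insert]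
  by_cases hi : i ∈ S <;> simp [hi] <;> grind

theorem canLower_raise_iff {j j' : ℕ} {S : Finset ℕ} (hne : j ≠ j') :
    CanRaise j S ∧ CanLower j' (raise j S) ↔ CanLower j' S ∧ CanRaise j (lower j' S) := by
  simp only [CanRaise, CanLower, raise, lower, mem_erase, mem_insert]
  grind

theorem lower_raise_comm {j j' : ℕ} (hne : j ≠ j') (S : Finset ℕ) :
    lower j' (raise j S) = raise j (lower j' S) := by
  ext i
  simp only [raise, lower, mem_erase, mem_insert]
  grind

theorem rank_complIcc_add {n : ℕ} {S : Finset ℕ} (hS : S ∈ subsets n) :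
    rank (complIcc n S) + rank S = topRank n :=
  sum_sdiff (mem_subsets.1 hS)

theorem complIcc_mem_subsets (n : ℕ) (S : Finset ℕ) : complIcc n S ∈ subsets n :=
  mem_subsets.2 sdiff_subset

theorem complIcc_complIcc {n : ℕ} {S : Finset ℕ} (hS : S ∈ subsets n) :
    complIcc n (complIcc n S) = S :=
  Finset.sdiff_sdiff_eq_self (mem_subsets.1 hS)

theorem raises_complIcc {n : ℕ} {S S' : Finset ℕ} (hS : S ∈ subsets n) (h : Raises n S S') :
    Raises n (complIcc n S') (complIcc n S) := by
  obtain ⟨j, hj, hc, rfl⟩ := h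
  have h0 := zero_notMem_of_mem_subsets hS
  have hsub := mem_subsets.1 hS
  refine ⟨j, hj, ?_, ?_⟩
  · simp only [CanRaise, complIcc, raise, mem_sdiff, mem_insert, mem_erase, mem_Icc] at hc ⊢
    grind
  · ext i
    simp only [complIcc, raise, mem_sdiff, mem_insert, mem_erase, mem_Icc]
    have := @hsub i
    simp only [mem_Icc] at this
    grind [CanRaise]

theorem sum_lt_sum_raise {β : Type*} [AddCommMonoid β] [PartialOrder β]
    [IsOrderedCancelAddMonoid β] {n j : ℕ} {S : Finset ℕ} {b : ℕ → β} (hb0 : 0 ≤ b 0)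
    (hb : StrictMonoOn b (Set.Iic n)) (hj : j < n) (h : CanRaise j S) :
    ∑ i ∈ S, b i < ∑ i ∈ raise j S, b i := by
  have hlt : b j < b (j + 1) := hb (by simp; omega) (by simp; omega) (by omega)
  rw [raise, sum_insert fun h' => h.2 (mem_of_mem_erase h')]
  by_cases hjS : j ∈ S
  · rw [← sum_erase_add _ _ hjS, add_comm]
    exact add_lt_add_left hlt _
  · obtain rfl : j = 0 := h.1.resolve_right hjS
    rw [erase_eq_of_notMem hjS]
    exact lt_add_of_pos_left _ (hb0.trans_lt hlt)

theorem isAntichain_filter_sum_eq {β : Type*} [AddCommMonoid β] [PartialOrder β]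
    [IsOrderedCancelAddMonoid β] {n : ℕ} {b : ℕ → β} (hb0 : 0 ≤ b 0)
    (hb : StrictMonoOn b (Set.Iic n)) (t : β) :
    IsAntichain (ReflTransGen (Raises n)) {S | S ∈ subsets n ∧ ∑ i ∈ S, b i = t} := by
  have hlt : ∀ S S', TransGen (Raises n) S S' → ∑ i ∈ S, b i < ∑ i ∈ S', b i := by
    intro S S' h
    induction h with
    | single h =>
      obtain ⟨j, hj, hc, rfl⟩ := h
      exact sum_lt_sum_raise hb0 hb hj hc
    | tail _ h ih =>
      obtain ⟨j, hj, hc, rfl⟩ := h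
      exact ih.trans (sum_lt_sum_raise hb0 hb hj hc)
  intro S hS S' hS' hne h
  have := hlt S S' ((reflTransGen_iff_eq_or_transGen.1 h).resolve_left (Ne.symm hne))
  rw [hS.2, hS'.2] at this
  exact lt_irrefl _ this

open Finsupp

-- Proctor's coefficients `2T - j(j+1)` (and `T` at `j = 0`), forced by `sum_lowerCoeff`, which
-- makes `D U - U D` act as `T - 2m` on rank `m`.
def lowerCoeff (n j : ℕ) : ℝ := if j = 0 then topRank n else n * (n + 1) - j * (j + 1)

theorem sum_lowerCoeff {n : ℕ} {S : Finset ℕ} (hS : S ∈ subsets n) :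
    ∑ j ∈ range n, ((if CanRaise j S then lowerCoeff n j else 0) -
      (if CanLower j S then lowerCoeff n j else 0)) = topRank n - 2 * rank S := by
  have hT : (topRank n : ℝ) * 2 = n * (n + 1) := by exact_mod_cast topRank_mul_two n
  have h0 := zero_notMem_of_mem_subsets hS
  -- Abel summation: each term is `g j - g (j + 1)` minus twice the share of `j + 1` in the rank.
  set g : ℕ → ℝ := fun j => if j = 0 then topRank n else if j ∈ S then lowerCoeff n j else 0
  have hterm : ∀ j ∈ range n, (if CanRaise j S then lowerCoeff n j else 0) -
      (if CanLower j S then lowerCoeff n j else 0) =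
      (g j - g (j + 1)) - 2 * (if j + 1 ∈ S then ((j + 1 : ℕ) : ℝ) else 0) := by
    intro j _
    rcases eq_or_ne j 0 with rfl | hj
    · by_cases h1 : 1 ∈ S
      · simp [g, CanRaise, CanLower, lowerCoeff, h0, h1]
        linarith
      · simp [g, CanRaise, CanLower, lowerCoeff, h0, h1]
    · by_cases hjS : j ∈ S <;> by_cases hj1 : j + 1 ∈ S <;>
        simp [g, CanRaise, CanLower, lowerCoeff, hj, hjS, hj1] <;> ring
  have hgn : g n = 0 := by
    rcases eq_or_ne n 0 with rfl | hn
    · simp [g, topRank, rank]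
    · simp [g, lowerCoeff, hn]
  have hrank : ∑ j ∈ range n, (if j + 1 ∈ S then ((j + 1 : ℕ) : ℝ) else 0) = rank S := by
    have hsub : S ⊆ range (n + 1) := fun i hi => by
      have := mem_Icc.1 (mem_subsets.1 hS hi)
      simp
      omega
    have := sum_range_succ' (fun i => if i ∈ S then (i : ℝ) else 0) n
    rw [sum_ite_mem, inter_eq_right.2 hsub] at this
    simpa [rank, h0] using this.symm
  rw [sum_congr rfl hterm, sum_sub_distrib, sum_range_sub', hgn, ← Finset.mul_sum, hrank]
  simp [g]

def up (n : ℕ) : Module.End ℝ (Finset ℕ →₀ ℝ) :=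
  linearCombination ℝ fun S => ∑ j ∈ range n with CanRaise j S, single (raise j S) 1

def down (n : ℕ) : Module.End ℝ (Finset ℕ →₀ ℝ) :=
  linearCombination ℝ fun S => ∑ j ∈ range n with CanLower j S, single (lower j S) (lowerCoeff n j)

theorem up_single (n : ℕ) (S : Finset ℕ) (c : ℝ) :
    up n (single S c) = ∑ j ∈ range n with CanRaise j S, single (raise j S) c := by
  simp only [up, linearCombination_single, Finset.smul_sum, smul_single, smul_eq_mul, mul_one]

theorem down_single (n : ℕ) (S : Finset ℕ) (c : ℝ) :
    down n (single S c) =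
      ∑ j ∈ range n with CanLower j S, single (lower j S) (c * lowerCoeff n j) := by
  simp only [down, linearCombination_single, Finset.smul_sum, smul_single, smul_eq_mul]

theorem down_up_single {n : ℕ} {S : Finset ℕ} (hS : S ∈ subsets n) :
    down n (up n (single S 1)) =
      up n (down n (single S 1)) + ((topRank n : ℝ) - 2 * rank S) • single S 1 := by
  have h0 := zero_notMem_of_mem_subsets hS
  let P : ℕ → ℕ → Finset ℕ →₀ ℝ := fun j j' =>
    if CanRaise j S ∧ CanLower j' (raise j S) then single (lower j' (raise j S)) (lowerCoeff n j')
    else 0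
  let Q : ℕ → ℕ → Finset ℕ →₀ ℝ := fun j j' =>
    if CanLower j' S ∧ CanRaise j (lower j' S) then single (raise j (lower j' S)) (lowerCoeff n j')
    else 0
  have hDU : down n (up n (single S 1)) = ∑ j ∈ range n, ∑ j' ∈ range n, P j j' := by
    simp only [up_single, map_sum, down_single, one_mul]
    simp only [sum_filter]
    refine sum_congr rfl fun j _ => ?_
    by_cases h : CanRaise j S <;> simp [P, h]
  have hUD : up n (down n (single S 1)) = ∑ j ∈ range n, ∑ j' ∈ range n, Q j j' := by
    simp only [down_single, map_sum, up_single, one_mul]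
    simp only [sum_filter]
    rw [Finset.sum_comm]
    refine sum_congr rfl fun j' _ => ?_
    by_cases h : CanLower j' S <;> simp [Q, h]
  have hoff : ∀ j j', j ≠ j' → P j j' = Q j j' := by
    intro j j' hne
    simp only [P, Q, canLower_raise_iff hne, lower_raise_comm hne]
  have hP : ∀ j, P j j = if CanRaise j S then single S (lowerCoeff n j) else 0 := by
    intro j
    by_cases h : CanRaise j S
    · simp [P, h, canLower_raise h h0]
    · simp [P, h]
  have hQ : ∀ j, Q j j = if CanLower j S then single S (lowerCoeff n j) else 0 := by
    intro j
    by_cases h : CanLower j S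
    · simp [Q, h, canRaise_lower h h0]
    · simp [Q, h]
  rw [← sub_eq_iff_eq_add', hDU, hUD, ← sum_sub_distrib, smul_single, smul_eq_mul, mul_one,
    ← sum_lowerCoeff hS, single_finsetSum]
  refine sum_congr rfl fun j hj => ?_
  rw [← sum_sub_distrib,
    sum_eq_single_of_mem j hj fun j' _ hne => by rw [hoff j j' hne.symm, sub_self], hP, hQ,
    single_sub]
  split_ifs <;> simp

def levelSpace (n m : ℕ) : Submodule ℝ (Finset ℕ →₀ ℝ) := supported ℝ ℝ (level n m)

theorem up_mem_levelSpace {n : ℕ} (m : ℕ) {v : Finset ℕ →₀ ℝ} (hv : v ∈ levelSpace n m) :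
    up n v ∈ levelSpace n (m + 1) := by
  refine apply_mem_of_forall_single_mem (fun S hS => ?_) hv
  obtain ⟨hS, hSm⟩ := hS
  rw [up_single]
  refine Submodule.sum_mem _ fun j hj => single_mem_supported ℝ _ ?_
  obtain ⟨hj, hc⟩ := mem_filter.1 hj
  exact ⟨raise_mem_subsets (mem_range.1 hj) hS, by rw [rank_raise hc, hSm]⟩

theorem down_mem_levelSpace {n : ℕ} (m : ℕ) {v : Finset ℕ →₀ ℝ} (hv : v ∈ levelSpace n (m + 1)) :
    down n v ∈ levelSpace n m := by
  refine apply_mem_of_forall_single_mem (fun S hS => ?_) hv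
  obtain ⟨hS, hSm⟩ := hS
  rw [down_single]
  refine Submodule.sum_mem _ fun j hj => single_mem_supported ℝ _ ?_
  obtain ⟨-, hc⟩ := mem_filter.1 hj
  obtain ⟨hc', he⟩ := canRaise_lower hc (zero_notMem_of_mem_subsets hS)
  have := rank_raise hc'
  rw [he] at this
  exact ⟨lower_mem_subsets hc hS, by omega⟩

theorem down_eq_zero_of_mem_levelSpace_zero {n : ℕ} {v : Finset ℕ →₀ ℝ}
    (hv : v ∈ levelSpace n 0) : down n v = 0 := by
  refine (Submodule.mem_bot ℝ).1 (apply_mem_of_forall_single_mem (fun S hS => ?_) hv)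
  rw [down_single, Submodule.mem_bot]
  have hS0 : rank S = 0 := hS.2
  refine sum_eq_zero fun j hj => absurd (mem_filter.1 hj).2.1 fun h => ?_
  exact j.succ_ne_zero (sum_eq_zero_iff.1 hS0 _ h)

theorem down_up {n : ℕ} (m : ℕ) {v : Finset ℕ →₀ ℝ} (hv : v ∈ levelSpace n m) :
    down n (up n v) = up n (down n v) + ((topRank n : ℝ) - 2 * m) • v := by
  have key := apply_mem_of_forall_single_mem (p := ⊥)
    (f := down n * up n - up n * down n - ((topRank n : ℝ) - 2 * m) • 1)
    (fun S hS => by simp [down_up_single hS.1, hS.2]) hv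
  simp only [Submodule.mem_bot, LinearMap.sub_apply, Module.End.mul_apply, LinearMap.smul_apply,
    Module.End.one_apply] at key
  rw [← sub_eq_zero, ← key]
  abel

theorem linearIndependent_up_single {n m : ℕ} (hm : 2 * m + 1 ≤ topRank n) :
    LinearIndependent ℝ fun S : level n m => up n (single (S : Finset ℕ) 1) := by
  have hsingle : LinearIndependent ℝ fun S : level n m => single (S : Finset ℕ) (1 : ℝ) :=
    (linearIndependent_single_one (R := ℝ) (ι := Finset ℕ)).comp _ Subtype.val_injective
  refine hsingle.map (f := up n) (Submodule.disjoint_def.2 fun v hv hker => ?_)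
  have hv' : v ∈ levelSpace n m := by
    rwa [levelSpace, supported_eq_span_single, Set.image_eq_range]
  exact eq_zero_of_up_pow_apply_eq_zero up_mem_levelSpace down_mem_levelSpace
    (fun _ => down_eq_zero_of_mem_levelSpace_zero) down_up m 1 v hv' hm (by simpa using hker)

theorem exists_injOn_raises {n m : ℕ} (hm : 2 * m + 1 ≤ topRank n) :
    ∃ g : Finset ℕ → Finset ℕ, Set.InjOn g (level n m) ∧ ∀ S ∈ level n m, Raises n S (g S) := by
  classical
  obtain ⟨g, hg, hgS⟩ :=
    exists_injective_apply_ne_zero_of_linearIndependent (linearIndependent_up_single hm)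
  refine ⟨fun S => if h : S ∈ level n m then g ⟨S, h⟩ else S, fun S hS S' hS' h => ?_,
    fun S hS => ?_⟩
  · simp only [dif_pos hS, dif_pos hS'] at h
    exact congrArg Subtype.val (hg h)
  · have := hgS ⟨S, hS⟩
    rw [up_single, finsetSum_apply] at this
    obtain ⟨j, hj, hne⟩ := exists_ne_zero_of_sum_ne_zero this
    obtain ⟨hj, hc⟩ := mem_filter.1 hj
    refine ⟨j, mem_range.1 hj, hc, ?_⟩
    simp only [dif_pos hS]
    by_contra h
    exact hne (single_eq_of_ne (Ne.symm h))

theorem exists_injOn_raises_of_lt {n m : ℕ} (hm : topRank n < 2 * m) :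
    ∃ g : Finset ℕ → Finset ℕ, Set.InjOn g (level n m) ∧
      ∀ S ∈ level n m, g S ∈ subsets n ∧ Raises n (g S) S := by
  rcases lt_or_ge (topRank n) m with hmT | hmT
  · have hempty : ∀ S ∈ level n m, False := fun S ⟨hS, hSm⟩ => by
      have := rank_le_topRank hS
      omega
    exact ⟨id, fun S hS => (hempty S hS).elim, fun S hS => (hempty S hS).elim⟩
  obtain ⟨g, hg, hgS⟩ := exists_injOn_raises (n := n) (m := topRank n - m) (by omega)
  have hcompl : ∀ S ∈ level n m, complIcc n S ∈ level n (topRank n - m) := fun S ⟨hS, hSm⟩ =>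
    ⟨complIcc_mem_subsets n S, by have := rank_complIcc_add hS; omega⟩
  have hgmem : ∀ S ∈ level n m, g (complIcc n S) ∈ subsets n := fun S hS => by
    obtain ⟨j, hj, -, he⟩ := hgS _ (hcompl S hS)
    exact he ▸ raise_mem_subsets hj (complIcc_mem_subsets n S)
  refine ⟨fun S => complIcc n (g (complIcc n S)), fun S hS S' hS' h => ?_,
    fun S hS => ⟨complIcc_mem_subsets n _, ?_⟩⟩
  · have h' := congrArg (complIcc n) h
    simp only [complIcc_complIcc (hgmem S hS), complIcc_complIcc (hgmem S' hS')] at h'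
    have h'' := congrArg (complIcc n) (hg (hcompl S hS) (hcompl S' hS') h')
    rwa [complIcc_complIcc hS.1, complIcc_complIcc hS'.1] at h''
  · have := raises_complIcc (complIcc_mem_subsets n S) (hgS _ (hcompl S hS))
    rwa [complIcc_complIcc hS.1] at this

theorem exists_towardMiddle_raises (n : ℕ) :
    ∃ f, TowardMiddle (Raises n) (subsets n) rank (topRank n / 2) f := by
  refine exists_towardMiddle (fun m hm => ?_) (fun m hm => ?_)
  · obtain ⟨g, hg, hgS⟩ := exists_injOn_raises (n := n) (m := m) (by omega)
    refine ⟨g, hg, fun S hS hSm => ?_⟩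
    obtain ⟨j, hj, hc, he⟩ := hgS S ⟨hS, hSm⟩
    exact ⟨he ▸ raise_mem_subsets hj hS, by rw [← he, rank_raise hc, hSm], j, hj, hc, he⟩
  · obtain ⟨g, hg, hgS⟩ := exists_injOn_raises_of_lt (n := n) (m := m) (by omega)
    refine ⟨g, hg, fun S hS hSm => ?_⟩
    obtain ⟨hmem, j, hj, hc, he⟩ := hgS S ⟨hS, hSm⟩
    have := rank_raise hc
    rw [he] at this
    exact ⟨hmem, by omega, j, hj, hc, he⟩

theorem card_filter_sum_eq_le {β : Type*} [AddCommMonoid β] [PartialOrder β]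
    [IsOrderedCancelAddMonoid β] [DecidableEq β] {n : ℕ} {b : ℕ → β} (hb0 : 0 ≤ b 0)
    (hb : StrictMonoOn b (Set.Iic n)) (t : β) :
    #{S ∈ subsets n | ∑ i ∈ S, b i = t} ≤ #{S ∈ subsets n | rank S = topRank n / 2} := by
  obtain ⟨f, hf⟩ := exists_towardMiddle_raises n
  refine hf.card_le_of_isAntichain (filter_subset _ _) ?_
  rw [coe_filter]
  exact isAntichain_filter_sum_eq hb0 hb t

def toSubset {N : ℕ} (x : Fin N → Bool) : Finset ℕ :=
  ({i | x i} : Finset (Fin N)).map (Fin.valEmbedding.trans (addRightEmbedding 1))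

theorem mem_toSubset {N : ℕ} {x : Fin N → Bool} {v : ℕ} :
    v ∈ toSubset x ↔ ∃ i : Fin N, x i ∧ (i : ℕ) + 1 = v := by
  simp [toSubset]

theorem toSubset_mem_subsets {N : ℕ} (x : Fin N → Bool) : toSubset x ∈ subsets N := by
  refine mem_subsets.2 fun v hv => ?_
  obtain ⟨i, -, rfl⟩ := mem_toSubset.1 hv
  simp [i.isLt]

theorem sum_toSubset {N : ℕ} {c : Fin N → ℝ} {b : ℕ → ℝ} (hb : ∀ i : Fin N, b (i + 1) = c i)
    (x : Fin N → Bool) : ∑ v ∈ toSubset x, b v = ∑ i, c i * (if x i then 1 else 0) := by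
  simp [toSubset, hb, sum_filter]

theorem toSubset_decide_mem {N : ℕ} {S : Finset ℕ} (hS : S ∈ subsets N) :
    toSubset (fun i : Fin N => decide ((i : ℕ) + 1 ∈ S)) = S := by
  ext v
  rw [mem_toSubset]
  constructor
  · rintro ⟨i, hi, rfl⟩
    simpa using hi
  · intro hv
    have := mem_Icc.1 (mem_subsets.1 hS hv)
    exact ⟨⟨v - 1, by omega⟩, by simpa [Nat.sub_add_cancel this.1] using hv, by simp; omega⟩

theorem wpmf_eq_card_subsets {N : ℕ} {c : Fin N → ℝ} {b : ℕ → ℝ}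
    (hb : ∀ i : Fin N, b (i + 1) = c i) (t : ℝ) :
    wpmf N c t = #{S ∈ subsets N | ∑ i ∈ S, b i = t} / 2 ^ N := by
  rw [wpmf]
  congr 2
  refine card_nbij' toSubset (fun S i => decide ((i : ℕ) + 1 ∈ S)) (fun x hx => ?_)
    (fun S hS => ?_) (fun x _ => ?_) (fun S hS => toSubset_decide_mem (mem_filter.1 hS).1)
  · simp only [coe_filter, mem_univ, true_and, Set.mem_ofPred_eq] at hx ⊢
    exact ⟨toSubset_mem_subsets x, (sum_toSubset hb x).trans hx⟩
  · simp only [coe_filter, mem_univ, true_and, Set.mem_ofPred_eq] at hS ⊢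
    rw [← sum_toSubset hb, toSubset_decide_mem hS.1, hS.2]
  · funext i
    simp [mem_toSubset, Fin.val_inj]

theorem wpmf_comp_perm {N : ℕ} (a : Fin N → ℝ) (σ : Equiv.Perm (Fin N)) :
    wpmf N (a ∘ σ) = wpmf N a := by
  funext t
  rw [wpmf, wpmf]
  congr 2
  refine card_equiv (σ.arrowCongr (Equiv.refl Bool)) fun x => ?_
  simp only [mem_filter, mem_univ, true_and, Equiv.arrowCongr_apply, Equiv.coe_refl,
    Function.comp_apply, id_eq]
  rw [← Equiv.sum_comp σ (fun i => a i * if x (σ.symm i) then 1 else 0)]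
  simp

def extendWeights {N : ℕ} (c : Fin N → ℝ) : ℕ → ℝ
  | 0 => 0
  | i + 1 => if h : i < N then c ⟨i, h⟩ else 0

theorem strictMonoOn_extendWeights {N : ℕ} {c : Fin N → ℝ} (hc : StrictMono c)
    (hpos : ∀ i, 0 < c i) : StrictMonoOn (extendWeights c) (Set.Iic N) := by
  rintro (_ | v) hv (_ | w) hw hvw
  · omega
  · simp only [Set.mem_Iic] at hw
    simpa [extendWeights, show w < N by omega] using hpos _
  · omega
  · simp only [Set.mem_Iic] at hv hw
    simpa [extendWeights, show v < N by omega, show w < N by omega] using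
      hc (Fin.mk_lt_mk.2 (by omega))

end ErdosMoser

/-- The Erdős–Moser extremal bound: for distinct positive weights, the concentration
probability is at most that of weights `1, 2, …, N` at the midpoint `⌊N(N+1)/4⌋`. -/
theorem erdos_moser (N : ℕ) (a : Fin N → ℝ) (hpos : ∀ i, 0 < a i)
    (hinj : Function.Injective a) (k : ℤ) :
    wpmf N a (k : ℝ) ≤ wpmf N (fun i => ((i : ℕ) : ℝ) + 1) ((N * (N + 1) / 4 : ℕ) : ℝ) := by
  set σ := Tuple.sort a
  have hsorted : StrictMono (a ∘ σ) :=
    (Tuple.monotone_sort a).strictMono_of_injective (hinj.comp σ.injective)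
  rw [← ErdosMoser.wpmf_comp_perm a σ,
    ErdosMoser.wpmf_eq_card_subsets (b := ErdosMoser.extendWeights (a ∘ σ))
      (by simp [ErdosMoser.extendWeights]),
    ErdosMoser.wpmf_eq_card_subsets (b := fun v => (v : ℝ)) (by simp)]
  refine div_le_div_of_nonneg_right (Nat.cast_le.2 ?_) (by positivity)
  calc _ ≤ #{S ∈ ErdosMoser.subsets N | ErdosMoser.rank S = ErdosMoser.topRank N / 2} :=
        ErdosMoser.card_filter_sum_eq_le le_rfl
          (ErdosMoser.strictMonoOn_extendWeights hsorted fun i => hpos _) _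
    _ = _ := by
        refine congrArg card (filter_congr fun S _ => ?_)
        rw [ErdosMoser.topRank_div_two, ErdosMoser.rank, ← Nat.cast_inj (R := ℝ), Nat.cast_sum]
end
end

section
/- The distribution of Y₁ + 2Y₂ + ... + NY_N, where Y_i are i.i.d. Bernoulli(1/2), is symmetric about N(N+1)/4 and unimodal: writing p_k = P(Σ iY_i = k), we have p_k = p_{N(N+1)/2 − k} for all k, and p_k ≤ p_{k+1} whenever k+1 ≤ N(N+1)/4. -/
/-!
Symmetry is complementation `S ↦ {1, …, N} \ S`. Unimodality is Proctor's `sl₂` proof of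
Stanley's theorem. On functions `v` on subsets of `{1, …, N}` let `E` raise the level, `(E v) S`
summing `v` over the subsets covered by `S` in `M(N)` (some `i ∈ S` replaced by `i - 1`, or `1`
deleted), and let `F` lower it, with Proctor's weights on the edges. Then `H = ⁅E, F⁆` acts on
level `k` as multiplication by `2k - N(N+1)/2`, and `⁅H, E⁆ = 2E`, `⁅H, F⁆ = -2F`. As `F` is
nilpotent, `sl₂` theory forces the weight of a vector killed by `E` to be a natural number, so `E`
is injective on the levels `k` with `2k < N(N+1)/2`, which bounds their size by that of level
`k + 1`.
-/

open Finset

noncomputable section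

/-- `subsetSumCount N k` is the number of subsets `S ⊆ {1, …, N}` with element-sum `k`;
the pmf of `Y₁ + 2Y₂ + ⋯ + N·Y_N` (with `Yᵢ` i.i.d. Bernoulli(1/2)) is
`p_k = subsetSumCount N k / 2^N`. -/
def subsetSumCount (N : ℕ) (k : ℤ) : ℕ :=
  (univ.filter fun S : Finset (Fin N) => ∑ i ∈ S, ((i : ℤ) + 1) = k).card

open LieModule

attribute [local instance] LieRing.ofAssociativeRing

theorem IsSl2Triple.HasPrimitiveVectorWith.exists_nat_of_pow_toEnd_f_eq_zero
    {R L M : Type*} [CommRing R] [IsDomain R] [CharZero R] [LieRing L] [LieAlgebra R L]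
    [AddCommGroup M] [Module R M] [Module.IsTorsionFree R M] [LieRingModule L M]
    [LieModule R L M] {h e f : L} {t : IsSl2Triple h e f} {m : M} {μ : R}
    (P : t.HasPrimitiveVectorWith m μ) (hf : ∃ n, (toEnd R L M f ^ n) m = 0) :
    ∃ n : ℕ, μ = n := by
  obtain ⟨n, hn, hn_succ⟩ := Nat.exists_not_and_succ_of_not_zero_of_exists P.ne_zero hf
  refine ⟨n, ?_⟩
  have := P.lie_e_pow_succ_toEnd_f n
  rw [hn_succ, lie_zero, eq_comm, smul_eq_zero_iff_left hn, mul_eq_zero, sub_eq_zero] at this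
  exact this.resolve_left (Nat.cast_add_one_ne_zero n)

theorem Module.End.eq_zero_of_isSl2Triple_relations
    {K V : Type*} [Field K] [CharZero K] [AddCommGroup V] [Module K V]
    {h e f : Module.End K V} (hef : ⁅e, f⁆ = h) (hhe : ⁅h, e⁆ = 2 • e) (hhf : ⁅h, f⁆ = -(2 • f))
    {v : V} {μ : K} (hμ : ∀ n : ℕ, μ ≠ n) (hv : h v = μ • v) (hev : e v = 0)
    (hfv : ∃ n, (f ^ n) v = 0) : v = 0 := by
  by_contra hv0
  have hh : h ≠ 0 := by
    rintro rfl
    exact hv0 ((smul_eq_zero.mp hv.symm).resolve_left (by exact_mod_cast hμ 0))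
  have t : IsSl2Triple h e f := ⟨hh, hef, hhe, hhf⟩
  have P : t.HasPrimitiveVectorWith v μ := ⟨hv0, hv, hev⟩
  obtain ⟨n, rfl⟩ := P.exists_nat_of_pow_toEnd_f_eq_zero hfv
  exact hμ n rfl

theorem Finset.card_le_card_of_linearMap {K ι : Type*} [Field K] (T : (ι → K) →ₗ[K] ι → K)
    {s t : Finset ι} (hmaps : ∀ v, Function.support v ⊆ s → Function.support (T v) ⊆ t)
    (hinj : ∀ v, Function.support v ⊆ s → T v = 0 → v = 0) : #s ≤ #t := by
  let Φ := LinearMap.funLeft K K ((↑) : t → ι) ∘ₗ T ∘ₗ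
    Function.ExtendByZero.linearMap K ((↑) : s → ι)
  have hΦ : Function.Injective Φ := by
    rw [← LinearMap.ker_eq_bot, LinearMap.ker_eq_bot']
    intro u hu
    have hsupp : Function.support (Function.extend ((↑) : s → ι) u 0) ⊆ s := by
      intro i hi
      by_contra his
      exact hi (Function.extend_apply' _ _ _ fun ⟨a, ha⟩ => his (ha ▸ a.2))
    have hT : T (Function.extend ((↑) : s → ι) u 0) = 0 := by
      ext i
      by_cases hit : i ∈ t
      · exact congrFun hu ⟨i, hit⟩
      · exact Function.notMem_support.mp fun hi => hit (hmaps _ hsupp hi)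
    funext a
    simpa [Subtype.val_injective.extend_apply] using congrFun (hinj _ hsupp hT) a
  simpa using LinearMap.finrank_le_finrank_of_injective hΦ

theorem Finset.sum_Icc_mul_sub_by_parts {R : Type*} [CommRing R] (g χ : ℕ → R) (n : ℕ) :
    ∑ i ∈ Icc 1 n, g i * (χ i - χ (i - 1)) =
      g (n + 1) * χ n - g 1 * χ 0 + ∑ i ∈ Icc 1 n, (g i - g (i + 1)) * χ i := by
  induction n with
  | zero => simp
  | succ n ih =>
    rw [sum_Icc_succ_top (by omega), sum_Icc_succ_top (by omega), ih, Nat.add_sub_cancel]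
    ring

namespace SubsetSumPoset

/- `lower i S` is the subset covered by `S` in `M(N)` obtained by moving `i` down to `i - 1`, or by
deleting `i = 1`; `raise i` is the inverse move. -/
def CanLower (i : ℕ) (S : Finset ℕ) : Prop := i ∈ S ∧ (i = 1 ∨ i - 1 ∉ S)

def CanRaise (i : ℕ) (S : Finset ℕ) : Prop := i ∉ S ∧ (i = 1 ∨ i - 1 ∈ S)

instance (i : ℕ) (S : Finset ℕ) : Decidable (CanLower i S) := inferInstanceAs (Decidable (_ ∧ _))

instance (i : ℕ) (S : Finset ℕ) : Decidable (CanRaise i S) := inferInstanceAs (Decidable (_ ∧ _))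

def lower (i : ℕ) (S : Finset ℕ) : Finset ℕ :=
  if i = 1 then S.erase 1 else insert (i - 1) (S.erase i)

def raise (i : ℕ) (S : Finset ℕ) : Finset ℕ :=
  if i = 1 then insert 1 S else insert i (S.erase (i - 1))

section Moves

variable {N i j : ℕ} {S : Finset ℕ}

lemma CanLower.one_le (h : CanLower i S) : 1 ≤ i := by
  rcases Nat.eq_zero_or_pos i with rfl | hi
  · simp [CanLower] at h
  · exact hi

lemma CanRaise.one_le (h : CanRaise i S) : 1 ≤ i := by
  rcases Nat.eq_zero_or_pos i with rfl | hi
  · simp [CanRaise] at h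
  · exact hi

lemma canRaise_lower (h : CanLower i S) : CanRaise i (lower i S) := by
  have := h.one_le
  unfold CanLower at h; unfold CanRaise lower
  split_ifs <;> simp_all; omega

lemma raise_lower (h : CanLower i S) : raise i (lower i S) = S := by
  have := h.one_le
  unfold CanLower at h; unfold raise lower
  ext x; split_ifs <;> simp_all

lemma canLower_raise (h : CanRaise i S) : CanLower i (raise i S) := by
  have := h.one_le
  unfold CanRaise at h; unfold CanLower raise
  split_ifs <;> simp_all; omega

lemma lower_raise (h : CanRaise i S) : lower i (raise i S) = S := by
  have := h.one_le
  unfold CanRaise at h; unfold raise lower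
  ext x; split_ifs <;> simp_all

lemma canLower_and_canRaise_lower_iff (hS : 0 ∉ S) (hij : i ≠ j) :
    CanLower i S ∧ CanRaise j (lower i S) ↔ CanRaise j S ∧ CanLower i (raise j S) := by
  simp only [CanLower, CanRaise, lower, raise]
  by_cases h1 : i ∈ S <;> by_cases h2 : j ∈ S <;> by_cases h3 : i - 1 ∈ S <;>
    by_cases h4 : j - 1 ∈ S <;> by_cases h5 : i = 1 <;> by_cases h6 : j = 1 <;>
    simp_all <;> omega

lemma raise_lower_comm (hij : i ≠ j) (hi : CanLower i S) (hj : CanRaise j (lower i S)) :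
    raise j (lower i S) = lower i (raise j S) := by
  obtain ⟨hiS, hi⟩ := hi
  obtain ⟨hjS, hj⟩ := hj
  ext x
  simp only [lower, raise]
  by_cases h5 : i = 1 <;> by_cases h6 : j = 1 <;> by_cases hx : x ∈ S <;>
    simp_all <;> omega

lemma ite_canLower_canRaise_comm {M : Type*} [Zero M] (f : Finset ℕ → M) (hS : 0 ∉ S)
    (hij : i ≠ j) :
    (if CanLower i S ∧ CanRaise j (lower i S) then f (raise j (lower i S)) else 0) =
      if CanRaise j S ∧ CanLower i (raise j S) then f (lower i (raise j S)) else 0 := by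
  by_cases h : CanLower i S ∧ CanRaise j (lower i S)
  · rw [if_pos h, if_pos ((canLower_and_canRaise_lower_iff hS hij).mp h),
      raise_lower_comm hij h.1 h.2]
  · rw [if_neg h, if_neg (mt (canLower_and_canRaise_lower_iff hS hij).mpr h)]

lemma lower_subset (hS : S ⊆ Icc 1 N) (h : CanLower i S) : lower i S ⊆ Icc 1 N := by
  have hi := mem_Icc.mp (hS h.1)
  unfold lower
  split_ifs with h1
  · exact (erase_subset _ _).trans hS
  · exact insert_subset (mem_Icc.mpr (by omega)) ((erase_subset _ _).trans hS)

lemma raise_subset (hS : S ⊆ Icc 1 N) (hiN : i ≤ N) (h : CanRaise i S) :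
    raise i S ⊆ Icc 1 N := by
  have hi := h.one_le
  unfold raise
  split_ifs with h1
  · exact insert_subset (mem_Icc.mpr (by omega)) hS
  · exact insert_subset (mem_Icc.mpr (by omega)) ((erase_subset _ _).trans hS)

lemma sum_lower {R : Type*} [CommRing R] (h : CanLower i S) :
    ∑ x ∈ lower i S, (x : R) = ∑ x ∈ S, (x : R) - 1 := by
  have hi := h.one_le
  rw [← sum_erase_add S _ h.1]
  unfold lower
  split_ifs with h1
  · subst h1; simp
  · rw [sum_insert fun hm => h.2.resolve_left h1 (mem_of_mem_erase hm)]
    push_cast [hi]; ring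

lemma sum_raise {R : Type*} [CommRing R] (h : CanRaise i S) :
    ∑ x ∈ raise i S, (x : R) = ∑ x ∈ S, (x : R) + 1 := by
  have hi := h.one_le
  unfold raise
  split_ifs with h1
  · subst h1; rw [sum_insert h.1]; simp; ring
  · have hi1 := h.2.resolve_left h1
    rw [sum_insert fun hm => h.1 (mem_of_mem_erase hm), ← sum_erase_add S _ hi1]
    push_cast [hi]; ring

end Moves

/-- Proctor's edge weights `(N + i)(N + 1 - i) = N(N + 1) - i(i - 1)`, halved on the edges that
delete `1`. -/
def coeff (N i : ℕ) : ℚ := if i = 1 then N * (N + 1) / 2 else N * (N + 1) - i * (i - 1)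

section Coefficients

variable {N i : ℕ} {S : Finset ℕ}

lemma coeff_mul_sub (hS : 0 ∉ S) :
    coeff N i * ((if CanLower i S then 1 else 0) - if CanRaise i S then 1 else 0) =
      (N * (N + 1) - i * (i - 1)) * ((if i ∈ S then 1 else 0) - if i - 1 ∈ S then 1 else 0) -
        if i = 1 then (N * (N + 1) / 2 : ℚ) else 0 := by
  unfold coeff CanLower CanRaise
  by_cases h1 : i = 1
  · subst h1; by_cases h : 1 ∈ S <;> simp [h, hS]; ring
  · by_cases hi : i ∈ S <;> by_cases hi' : i - 1 ∈ S <;> simp [h1, hi, hi']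

lemma sum_coeff_mul_sub (hS : S ⊆ Icc 1 N) :
    ∑ i ∈ Icc 1 N, coeff N i * ((if CanLower i S then 1 else 0) - if CanRaise i S then 1 else 0) =
      2 * ∑ x ∈ S, (x : ℚ) - N * (N + 1) / 2 := by
  have h0 : 0 ∉ S := fun h => by simpa using hS h
  have hN : ∑ i ∈ Icc 1 N, (if i = 1 then (N * (N + 1) / 2 : ℚ) else 0) = N * (N + 1) / 2 := by
    rw [sum_ite_eq']
    rcases N with _ | N <;> simp
  have hS' : ∑ i ∈ Icc 1 N, 2 * (i : ℚ) * (if i ∈ S then 1 else 0) = 2 * ∑ x ∈ S, (x : ℚ) := by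
    simp_rw [mul_boole, ← sum_filter, filter_mem_eq_inter, inter_eq_right.mpr hS, mul_sum]
  rw [sum_congr rfl fun i _ => coeff_mul_sub h0, sum_sub_distrib,
    sum_Icc_mul_sub_by_parts (fun i : ℕ => (N * (N + 1) - i * (i - 1) : ℚ)), hN, ← hS']
  push_cast
  simp only [h0, if_false, mul_zero, sub_zero]
  ring_nf

end Coefficients

section Operators

variable (N : ℕ)

/- The operators vanish outside the subsets of `{1, …, N}`, so that the `sl₂` relations hold on
all of `Finset ℕ → ℚ`. -/
def raiseOp : Module.End ℚ (Finset ℕ → ℚ) :=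
  LinearMap.pi fun S => if S ⊆ Icc 1 N then
    ∑ i ∈ Icc 1 N, if CanLower i S then LinearMap.proj (lower i S) else 0 else 0

def lowerOp : Module.End ℚ (Finset ℕ → ℚ) :=
  LinearMap.pi fun S => if S ⊆ Icc 1 N then
    ∑ i ∈ Icc 1 N, if CanRaise i S then coeff N i • LinearMap.proj (raise i S) else 0 else 0

def weightOp : Module.End ℚ (Finset ℕ → ℚ) :=
  LinearMap.pi fun S => if S ⊆ Icc 1 N then
    (2 * ∑ x ∈ S, (x : ℚ) - N * (N + 1) / 2) • LinearMap.proj S else 0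

variable {N} (v : Finset ℕ → ℚ) (S : Finset ℕ)

lemma raiseOp_apply : raiseOp N v S =
    if S ⊆ Icc 1 N then ∑ i ∈ Icc 1 N, if CanLower i S then v (lower i S) else 0 else 0 := by
  simp only [raiseOp, LinearMap.pi_apply]
  split_ifs <;> simp [apply_ite, ite_apply]

lemma lowerOp_apply : lowerOp N v S =
    if S ⊆ Icc 1 N then
      ∑ i ∈ Icc 1 N, if CanRaise i S then coeff N i * v (raise i S) else 0 else 0 := by
  simp only [lowerOp, LinearMap.pi_apply]
  split_ifs <;> simp [apply_ite, ite_apply]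

lemma weightOp_apply : weightOp N v S =
    if S ⊆ Icc 1 N then (2 * ∑ x ∈ S, (x : ℚ) - N * (N + 1) / 2) * v S else 0 := by
  simp only [weightOp, LinearMap.pi_apply]
  split_ifs <;> simp

end Operators

section Relations

variable {N : ℕ}

lemma raiseOp_lowerOp_sub_lowerOp_raiseOp_apply {S : Finset ℕ} (hS : S ⊆ Icc 1 N)
    (v : Finset ℕ → ℚ) :
    raiseOp N (lowerOp N v) S - lowerOp N (raiseOp N v) S =
      (2 * ∑ x ∈ S, (x : ℚ) - N * (N + 1) / 2) * v S := by
  have h0 : 0 ∉ S := fun h => by simpa using hS h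
  have hEF : raiseOp N (lowerOp N v) S = ∑ i ∈ Icc 1 N, ∑ j ∈ Icc 1 N,
      if CanLower i S ∧ CanRaise j (lower i S) then coeff N j * v (raise j (lower i S)) else 0 := by
    rw [raiseOp_apply, if_pos hS]
    refine sum_congr rfl fun i _ => ?_
    by_cases hi : CanLower i S
    · simp [hi, lowerOp_apply, lower_subset hS hi]
    · simp [hi]
  have hFE : lowerOp N (raiseOp N v) S = ∑ i ∈ Icc 1 N, ∑ j ∈ Icc 1 N,
      if CanRaise j S ∧ CanLower i (raise j S) then coeff N j * v (lower i (raise j S)) else 0 := by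
    rw [lowerOp_apply, if_pos hS, sum_comm]
    refine sum_congr rfl fun j hj => ?_
    by_cases hj' : CanRaise j S
    · simp [hj', raiseOp_apply, raise_subset hS (mem_Icc.mp hj).2 hj', mul_sum]
    · simp [hj']
  -- The terms with `j ≠ i` cancel because the moves at `i` and `j` commute; those with `j = i`
  -- return to `S`.
  rw [hEF, hFE, ← sum_coeff_mul_sub hS, sum_mul, ← sum_sub_distrib]
  refine sum_congr rfl fun i hi => ?_
  rw [← sum_sub_distrib, sum_eq_single i
    (fun j _ hji => by
      rw [ite_canLower_canRaise_comm (fun T => coeff N j * v T) h0 hji.symm, sub_self])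
    (fun h => absurd hi h)]
  by_cases hl : CanLower i S
  · have hr : ¬CanRaise i S := fun hr => hr.1 hl.1
    simp [hl, hr, canRaise_lower, raise_lower]
  · by_cases hr : CanRaise i S
    · simp [hl, hr, canLower_raise, lower_raise]
    · simp [hl, hr]

lemma lie_raiseOp_lowerOp : ⁅raiseOp N, lowerOp N⁆ = weightOp N := by
  ext v S
  rw [LieRing.of_associative_ring_bracket, LinearMap.sub_apply, Module.End.mul_apply,
    Module.End.mul_apply, Pi.sub_apply, weightOp_apply]
  split_ifs with hS
  · exact raiseOp_lowerOp_sub_lowerOp_raiseOp_apply hS v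
  · simp [raiseOp_apply, lowerOp_apply, hS]

lemma lie_weightOp_raiseOp : ⁅weightOp N, raiseOp N⁆ = 2 • raiseOp N := by
  ext v S
  simp only [LieRing.of_associative_ring_bracket, LinearMap.sub_apply, Module.End.mul_apply,
    Pi.sub_apply, LinearMap.smul_apply, Pi.smul_apply, weightOp_apply, raiseOp_apply]
  split_ifs with hS
  · rw [mul_sum, ← sum_sub_distrib, smul_sum]
    refine sum_congr rfl fun i _ => ?_
    by_cases hi : CanLower i S
    · simp only [if_pos hi, if_pos (lower_subset hS hi), sum_lower hi]
      rw [nsmul_eq_mul]; push_cast; ring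
    · simp [hi]
  · simp

lemma lie_weightOp_lowerOp : ⁅weightOp N, lowerOp N⁆ = -(2 • lowerOp N) := by
  ext v S
  simp only [LieRing.of_associative_ring_bracket, LinearMap.sub_apply, Module.End.mul_apply,
    Pi.sub_apply, LinearMap.neg_apply, LinearMap.smul_apply, Pi.neg_apply, Pi.smul_apply,
    weightOp_apply, lowerOp_apply]
  split_ifs with hS
  · rw [mul_sum, ← sum_sub_distrib, smul_sum, ← sum_neg_distrib]
    refine sum_congr rfl fun i hi => ?_
    by_cases hi' : CanRaise i S
    · simp only [if_pos hi', if_pos (raise_subset hS (mem_Icc.mp hi).2 hi'), sum_raise hi']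
      rw [nsmul_eq_mul]; push_cast; ring
    · simp [hi']
  · simp

end Relations

def level (N : ℕ) (k : ℤ) : Finset (Finset ℕ) :=
  (Icc 1 N).powerset.filter fun S => ∑ x ∈ S, (x : ℤ) = k

section Levels

open Function

variable {N : ℕ} {k : ℤ} {S : Finset ℕ} {v : Finset ℕ → ℚ}

lemma mem_level : S ∈ level N k ↔ S ⊆ Icc 1 N ∧ ∑ x ∈ S, (x : ℤ) = k := by
  simp [level]

lemma level_eq_empty (hk : k < 0) : level N k = ∅ :=
  filter_false_of_mem fun _ _ h => hk.not_ge (h ▸ sum_nonneg fun x _ => Int.natCast_nonneg x)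

lemma support_raiseOp_subset (hv : support v ⊆ level N k) :
    support (raiseOp N v) ⊆ level N (k + 1) := by
  intro S hS
  rw [mem_support, raiseOp_apply] at hS
  obtain ⟨hSN, hS⟩ := ite_ne_right_iff.mp hS
  obtain ⟨i, -, hi⟩ := exists_ne_zero_of_sum_ne_zero hS
  obtain ⟨hl, hi⟩ := ite_ne_right_iff.mp hi
  have hlevel := (mem_level.mp (hv hi)).2
  exact mem_level.mpr ⟨hSN, by rw [sum_lower hl] at hlevel; omega⟩

lemma support_lowerOp_subset (hv : support v ⊆ level N k) :
    support (lowerOp N v) ⊆ level N (k - 1) := by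
  intro S hS
  rw [mem_support, lowerOp_apply] at hS
  obtain ⟨hSN, hS⟩ := ite_ne_right_iff.mp hS
  obtain ⟨i, -, hi⟩ := exists_ne_zero_of_sum_ne_zero hS
  obtain ⟨hr, hi⟩ := ite_ne_right_iff.mp hi
  have hlevel := (mem_level.mp (hv (right_ne_zero_of_mul hi))).2
  exact mem_level.mpr ⟨hSN, by rw [sum_raise hr] at hlevel; omega⟩

lemma weightOp_apply_eq_smul (hv : support v ⊆ level N k) :
    weightOp N v = (2 * k - N * (N + 1) / 2 : ℚ) • v := by
  funext S
  rw [weightOp_apply, Pi.smul_apply, smul_eq_mul]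
  by_cases hS : v S = 0
  · simp [hS]
  · obtain ⟨hSN, hsum⟩ := mem_level.mp (hv hS)
    rw [if_pos hSN, ← hsum]
    push_cast
    ring

lemma pow_lowerOp_apply_eq_zero (hv : support v ⊆ level N k) :
    (lowerOp N ^ (k.toNat + 1)) v = 0 := by
  have hsupp : ∀ n : ℕ, support ((lowerOp N ^ n) v) ⊆ level N (k - n) := by
    intro n
    induction n with
    | zero => simpa using hv
    | succ n ih =>
      rw [pow_succ', Module.End.mul_apply, Nat.cast_succ, ← sub_sub]
      exact support_lowerOp_subset ih
  have := hsupp (k.toNat + 1)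
  rwa [level_eq_empty (by omega), coe_empty, Set.subset_empty_iff, support_eq_empty_iff] at this

lemma eq_zero_of_raiseOp_eq_zero (hk : 4 * k < N * (N + 1)) (hv : support v ⊆ level N k)
    (hE : raiseOp N v = 0) : v = 0 := by
  have hk' : (4 * k : ℚ) < N * (N + 1) := by exact_mod_cast hk
  refine Module.End.eq_zero_of_isSl2Triple_relations lie_raiseOp_lowerOp lie_weightOp_raiseOp
    lie_weightOp_lowerOp (fun n hn => ?_) (weightOp_apply_eq_smul hv) hE
    ⟨_, pow_lowerOp_apply_eq_zero hv⟩
  have : (0 : ℚ) ≤ n := n.cast_nonneg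
  linarith

lemma card_level_le_card_level_add_one (hk : 4 * k < N * (N + 1)) :
    #(level N k) ≤ #(level N (k + 1)) :=
  card_le_card_of_linearMap (raiseOp N) (fun _ => support_raiseOp_subset)
    (fun _ => eq_zero_of_raiseOp_eq_zero hk)

end Levels

end SubsetSumPoset

open SubsetSumPoset in
theorem subsetSumCount_eq_card_level (N : ℕ) (k : ℤ) : subsetSumCount N k = #(level N k) := by
  let e : Fin N ↪ ℕ := Fin.valEmbedding.trans (addRightEmbedding 1)
  have he : univ.map e = Icc 1 N := by
    ext x
    simp only [mem_map, mem_univ, true_and, mem_Icc, e, Function.Embedding.trans_apply,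
      Fin.valEmbedding_apply, addRightEmbedding_apply]
    constructor
    · rintro ⟨a, rfl⟩
      omega
    · intro hx
      exact ⟨⟨x - 1, by omega⟩, by simp only; omega⟩
  have hsum (S : Finset (Fin N)) : ∑ x ∈ S.map e, (x : ℤ) = ∑ i ∈ S, ((i : ℤ) + 1) := by
    simp [e]
  refine card_bij (fun S _ => S.map e) (fun S hS => ?_) (fun S _ T _ h => map_injective e h)
    (fun T hT => ?_)
  · exact mem_level.mpr
      ⟨he ▸ map_subset_map.mpr (subset_univ S), (hsum S).trans (mem_filter.mp hS).2⟩
  · obtain ⟨hTN, hTk⟩ := mem_level.mp hT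
    obtain ⟨S, -, rfl⟩ := subset_map_iff.mp (he ▸ hTN)
    exact ⟨S, mem_filter.mpr ⟨mem_univ S, (hsum S).symm.trans hTk⟩, rfl⟩

theorem subsetSumCount_eq_subsetSumCount_sub (N : ℕ) (k : ℤ) :
    subsetSumCount N k = subsetSumCount N (N * (N + 1) / 2 - k) := by
  have htotal : 2 * ∑ i : Fin N, ((i : ℤ) + 1) = N * (N + 1) := by
    induction N with
    | zero => simp
    | succ n ih =>
      rw [Fin.sum_univ_castSucc]
      push_cast
      simp only [Fin.val_castSucc]
      linarith
  refine card_equiv (compl_involutive.toPerm _) fun S => ?_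
  have hsplit := sum_add_sum_compl S fun i : Fin N => (i : ℤ) + 1
  simp only [mem_filter, mem_univ, true_and, Function.Involutive.coe_toPerm]
  omega

/-- The distribution of `Y₁ + 2Y₂ + ⋯ + N·Y_N` is symmetric about `N(N+1)/4` and unimodal:
`p_k = p_{N(N+1)/2 - k}` for all `k`, and `p_k ≤ p_{k+1}` whenever `k + 1 ≤ N(N+1)/4`. -/
theorem weighted_bernoulli_sum_symmetric_unimodal (N : ℕ) :
    (∀ k : ℤ, subsetSumCount N k = subsetSumCount N ((N : ℤ) * (N + 1) / 2 - k))
    ∧ (∀ k : ℤ, 4 * (k + 1) ≤ (N : ℤ) * (N + 1) → subsetSumCount N k ≤ subsetSumCount N (k + 1)) := by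
  refine ⟨subsetSumCount_eq_subsetSumCount_sub N, fun k hk => ?_⟩
  rw [subsetSumCount_eq_card_level, subsetSumCount_eq_card_level]
  exact SubsetSumPoset.card_level_le_card_level_add_one (by linarith)
end
end
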